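/- arXiv:math/0702874 — 8 statements merged into one kernel-verified Lean document; each statement's English description precedes it below -/
import Mathlib

section
/- Let Q be a torsion, commutative, diassociative loop. Then Q is the internal direct product of its p-primary components: for every prime p the p-primary component Q_p is a normal subloop of Q; Q is generated by the union of the Q_p over all primes p; and for every prime p, the intersection of Q_p with the subloop generated by the union of the Q_q over all primes q ≠ p is {1}. -/
universe u

namespace CRIFPaper

/-- A loop: a set with a binary operation and a neutral element `1` in which
all left and right translations are bijections (equivalently, the equations
`a * x = b` and `y * a = b` have unique solutions). -/
class Loop (Q : Type u) extends Mul Q, One Q where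
  one_mul : ∀ x : Q, 1 * x = x
  mul_one : ∀ x : Q, x * 1 = x
  mulLeft_bijective : ∀ a : Q, Function.Bijective (fun x : Q => a * x)
  mulRight_bijective : ∀ a : Q, Function.Bijective (fun x : Q => x * a)

/-- A loop equipped with a two-sided inverse map (as is the case for
commutative diassociative loops). -/
class InvLoop (Q : Type u) extends Loop Q, Inv Q where
  mul_inv : ∀ x : Q, x * x⁻¹ = 1
  inv_mul : ∀ x : Q, x⁻¹ * x = 1

/-- Powers in a loop (left-bracketed; in diassociative loops powers are
unambiguous and agree with this bracketing). -/
def lpow {Q : Type u} [Mul Q] [One Q] (x : Q) : ℕ → Q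
  | 0 => 1
  | n + 1 => lpow x n * x

/-- The order of an element: the least `n > 0` with `x ^ n = 1`. -/
noncomputable def ord {Q : Type u} [Mul Q] [One Q] (x : Q) : ℕ :=
  sInf {n : ℕ | 0 < n ∧ lpow x n = 1}

/-- A loop is torsion if every element has finite order. -/
def Torsion (Q : Type u) [Mul Q] [One Q] : Prop :=
  ∀ x : Q, ∃ n : ℕ, 0 < n ∧ lpow x n = 1

/-- The `p`-primary component: elements whose order is a power of `p`. -/
def primary (Q : Type u) [Mul Q] [One Q] (p : ℕ) : Set Q :=
  {x : Q | ∃ k : ℕ, ord x = p ^ k}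

/-- A subloop: a subset containing `1` closed under multiplication and inverses. -/
def IsSubloop {Q : Type u} [Mul Q] [One Q] [Inv Q] (S : Set Q) : Prop :=
  (1 : Q) ∈ S ∧ (∀ a ∈ S, ∀ b ∈ S, a * b ∈ S) ∧ ∀ a ∈ S, a⁻¹ ∈ S

/-- Normality of a subloop of a commutative loop: for all `a ∈ S` and `x y`,
the unique `d` with `(x * y) * d = x * (y * a)` lies in `S`. -/
def IsNormalSubloop {Q : Type u} [Mul Q] [One Q] [Inv Q] (S : Set Q) : Prop :=
  IsSubloop S ∧ ∀ a ∈ S, ∀ x y d : Q, (x * y) * d = x * (y * a) → d ∈ S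

/-- The subloop generated by a subset: the smallest subloop containing it. -/
def genSubloop {Q : Type u} [Mul Q] [One Q] [Inv Q] (T : Set Q) : Set Q :=
  ⋂₀ {S : Set Q | IsSubloop S ∧ T ⊆ S}

/-- Membership in the smallest subset containing `x` and `y` and closed under
multiplication and inverses. -/
inductive gen2 {Q : Type u} [Mul Q] [Inv Q] (x y : Q) : Q → Prop
  | fst : gen2 x y x
  | snd : gen2 x y y
  | mul : ∀ {a b : Q}, gen2 x y a → gen2 x y b → gen2 x y (a * b)
  | inv : ∀ {a : Q}, gen2 x y a → gen2 x y a⁻¹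

/-- A loop is diassociative if any two elements generate a subgroup: any three
elements of the closure of `{x, y}` under multiplication and inverses associate. -/
def Diassociative (Q : Type u) [Mul Q] [Inv Q] : Prop :=
  ∀ x y a b c : Q, gen2 x y a → gen2 x y b → gen2 x y c → a * (b * c) = (a * b) * c

/-! ### Auxiliary development -/

section Aux

variable {Q : Type u}

section Basic
variable [InvLoop Q]

theorem loop_left_cancel {a b c : Q} (h : a * b = a * c) : b = c :=
  (Loop.mulLeft_bijective a).1 h

theorem gen2_one (x y : Q) : gen2 x y (1 : Q) := by
  have h := gen2.mul (gen2.fst (x := x) (y := y)) (gen2.inv gen2.fst)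
  rwa [InvLoop.mul_inv] at h

theorem gen2_lpow {x y a : Q} (h : gen2 x y a) : ∀ n : ℕ, gen2 x y (lpow a n)
  | 0 => gen2_one x y
  | n + 1 => gen2.mul (gen2_lpow h n) h

/-- The subtype of elements generated by `x` and `y`. -/
abbrev G (x y : Q) : Type u := {a : Q // gen2 x y a}

end Basic

/-- Bundling of the hypotheses of the main theorem as a class. -/
class Nice (Q : Type u) extends InvLoop Q where
  comm : ∀ x y : Q, x * y = y * x
  di : Diassociative Q
  tor : Torsion Q

variable [Nice Q]

instance instCommGroupG (x y : Q) : CommGroup (G x y) where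
  mul a b := ⟨a.1 * b.1, a.2.mul b.2⟩
  one := ⟨1, gen2_one x y⟩
  inv a := ⟨a.1⁻¹, a.2.inv⟩
  mul_assoc a b c := Subtype.ext ((Nice.di x y _ _ _ a.2 b.2 c.2).symm)
  one_mul a := Subtype.ext (Loop.one_mul a.1)
  mul_one a := Subtype.ext (Loop.mul_one a.1)
  inv_mul_cancel a := Subtype.ext (InvLoop.inv_mul a.1)
  mul_comm a b := Subtype.ext (Nice.comm a.1 b.1)

theorem G.coe_mul {x y : Q} (a b : G x y) : (a * b).1 = a.1 * b.1 := rfl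

theorem G.coe_pow {x y : Q} (g : G x y) (n : ℕ) : (g ^ n).1 = lpow g.1 n := by
  induction n with
  | zero => rw [pow_zero]; rfl
  | succ n ih =>
      rw [pow_succ, G.coe_mul, ih]
      rfl

theorem G.pow_eq_one_iff {x y : Q} (g : G x y) (n : ℕ) : g ^ n = 1 ↔ lpow g.1 n = 1 := by
  constructor
  · intro h
    have := congrArg Subtype.val h
    rwa [G.coe_pow] at this
  · intro h
    apply Subtype.ext
    rw [G.coe_pow]
    exact h

theorem G.fin {x y : Q} (g : G x y) : IsOfFinOrder g := by
  obtain ⟨n, hn, h⟩ := Nice.tor g.1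
  exact isOfFinOrder_iff_pow_eq_one.2 ⟨n, hn, (G.pow_eq_one_iff g n).2 h⟩

theorem G.orderOf_eq {x y : Q} (g : G x y) : orderOf g = ord g.1 := by
  have hfin := G.fin g
  have hmem : orderOf g ∈ {n : ℕ | 0 < n ∧ lpow g.1 n = 1} :=
    ⟨hfin.orderOf_pos, (G.pow_eq_one_iff g _).1 (pow_orderOf_eq_one g)⟩
  have h1 : ord g.1 ≤ orderOf g := Nat.sInf_le hmem
  have h2 := Nat.sInf_mem (⟨_, hmem⟩ : {n : ℕ | 0 < n ∧ lpow g.1 n = 1}.Nonempty)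
  have hdvd : orderOf g ∣ ord g.1 := orderOf_dvd_of_pow_eq_one ((G.pow_eq_one_iff g _).2 h2.2)
  exact le_antisymm (Nat.le_of_dvd h2.1 hdvd) h1

theorem ord_spec (x : Q) : 0 < ord x ∧ lpow x (ord x) = 1 := by
  obtain ⟨n, hn, h⟩ := Nice.tor x
  exact Nat.sInf_mem (⟨n, hn, h⟩ : {n : ℕ | 0 < n ∧ lpow x n = 1}.Nonempty)

/-- The canonical element `x` of `G x x`. -/
def gx (x : Q) : G x x := ⟨x, gen2.fst⟩

theorem lpow_eq_one_iff_dvd (x : Q) (n : ℕ) : lpow x n = 1 ↔ ord x ∣ n := by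
  have h := G.pow_eq_one_iff (gx x) n
  have h2 := orderOf_dvd_iff_pow_eq_one (x := gx x) (n := n)
  rw [G.orderOf_eq] at h2
  exact h.symm.trans h2.symm

theorem lpow_add' (x : Q) (a b : ℕ) : lpow x (a + b) = lpow x a * lpow x b := by
  have h := G.coe_pow (gx x) (a + b)
  rw [pow_add, G.coe_mul, G.coe_pow, G.coe_pow] at h
  exact h.symm

theorem lpow_lpow (x : Q) (a b : ℕ) : lpow (lpow x a) b = lpow x (a * b) := by
  have h := G.coe_pow ((gx x) ^ a) b
  rw [← pow_mul, G.coe_pow, G.coe_pow] at h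
  exact h.symm

theorem lpow_one' (x : Q) : lpow x 1 = x := by
  show lpow x 0 * x = x
  show (1 : Q) * x = x
  exact Loop.one_mul x

theorem lpow_one_elem : ∀ n : ℕ, lpow (1 : Q) n = 1
  | 0 => rfl
  | n + 1 => by
      show lpow (1 : Q) n * 1 = 1
      rw [lpow_one_elem n, Loop.mul_one]

theorem ord_inv (x : Q) : ord x⁻¹ = ord x := by
  have h := orderOf_inv (gx x)
  rwa [G.orderOf_eq, G.orderOf_eq] at h

theorem ord_one' : ord (1 : Q) = 1 := by
  have h := G.orderOf_eq (1 : G (1 : Q) 1)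
  rw [orderOf_one] at h
  exact h.symm

theorem eq_one_of_ord_eq_one {x : Q} (h : ord x = 1) : x = 1 := by
  have h2 := (ord_spec x).2
  rwa [h, lpow_one'] at h2

theorem ord_mul_dvd_lcm (x y : Q) : ord (x * y) ∣ Nat.lcm (ord x) (ord y) := by
  have h := (Commute.all (⟨x, gen2.fst⟩ : G x y) ⟨y, gen2.snd⟩).orderOf_mul_dvd_lcm
  rw [G.orderOf_eq, G.orderOf_eq, G.orderOf_eq] at h
  exact h

theorem ord_lpow_dvd (x : Q) (j : ℕ) : ord (lpow x j) ∣ ord x := by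
  rw [← lpow_eq_one_iff_dvd]
  rw [lpow_lpow, Nat.mul_comm, ← lpow_lpow, (ord_spec x).2, lpow_one_elem]

theorem lpow_modEq (x : Q) {a b : ℕ} (h : a ≡ b [MOD ord x]) : lpow x a = lpow x b := by
  have h1 : (gx x) ^ a = (gx x) ^ b := pow_eq_pow_iff_modEq.2 (by rwa [G.orderOf_eq])
  have h2 := congrArg Subtype.val h1
  rwa [G.coe_pow, G.coe_pow] at h2

theorem hp_not_dvd_of_dvd_lcm {p a b c : ℕ} (hp : p.Prime) (ha : ¬ p ∣ a) (hb : ¬ p ∣ b)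
    (hc : c ∣ Nat.lcm a b) : ¬ p ∣ c := fun h => by
  have hab : p ∣ a * b := (h.trans hc).trans (Nat.lcm_dvd_mul a b)
  rcases hp.dvd_mul.1 hab with h' | h'
  exacts [ha h', hb h']

theorem pow_of_dvd_lcm_pow {p ka kb c : ℕ} (hp : p.Prime)
    (hc : c ∣ Nat.lcm (p ^ ka) (p ^ kb)) : ∃ k, c = p ^ k := by
  have h : c ∣ p ^ max ka kb := hc.trans
    (Nat.lcm_dvd (pow_dvd_pow p (le_max_left ka kb)) (pow_dvd_pow p (le_max_right ka kb)))
  obtain ⟨k, _, hk⟩ := (Nat.dvd_prime_pow hp).1 h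
  exact ⟨k, hk⟩

theorem exists_decomp {p : ℕ} (hp : p.Prime) (x : Q) :
    ∃ u v : Q, (∃ i, u = lpow x i) ∧ (∃ j, v = lpow x j) ∧ u * v = x ∧
      (∃ k, ord u = p ^ k) ∧ ord v ∣ ord x / p ^ (ord x).factorization p := by
  have hn0 : ord x ≠ 0 := (ord_spec x).1.ne'
  set n := ord x with hn
  set k := n.factorization p with hkdef
  set m := n / p ^ k with hm
  have hnm : p ^ k * m = n := Nat.ordProj_mul_ordCompl_eq_self n p
  have hco : Nat.Coprime (p ^ k) m := (Nat.coprime_ordCompl hp hn0).pow_left k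
  obtain ⟨e, he⟩ := Nat.chineseRemainder hco 1 0
  obtain ⟨f, hf⟩ := Nat.chineseRemainder hco 0 1
  refine ⟨lpow x e, lpow x f, ⟨e, rfl⟩, ⟨f, rfl⟩, ?_, ?_, ?_⟩
  · rw [← lpow_add']
    have h1 : e + f ≡ 1 + 0 [MOD p ^ k] := he.1.add hf.1
    have h2 : e + f ≡ 0 + 1 [MOD m] := he.2.add hf.2
    have h3 : e + f ≡ 1 [MOD n] := by
      rw [← hnm]
      exact (Nat.modEq_and_modEq_iff_modEq_mul hco).1 ⟨by simpa using h1, by simpa using h2⟩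
    rw [lpow_modEq x h3, lpow_one']
  · obtain ⟨t, ht⟩ := Nat.modEq_zero_iff_dvd.1 he.2
    have h4 : lpow (lpow x e) (p ^ k) = 1 := by
      rw [lpow_lpow, ht]
      have h5 : m * t * p ^ k = n * t := by rw [← hnm]; ring
      rw [h5, ← lpow_lpow, (ord_spec x).2, lpow_one_elem]
    have hdvd : ord (lpow x e) ∣ p ^ k := (lpow_eq_one_iff_dvd _ _).1 h4
    obtain ⟨k', _, hk'⟩ := (Nat.dvd_prime_pow hp).1 hdvd
    exact ⟨k', hk'⟩
  · obtain ⟨t, ht⟩ := Nat.modEq_zero_iff_dvd.1 hf.1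
    have h4 : lpow (lpow x f) m = 1 := by
      rw [lpow_lpow, ht]
      have h5 : p ^ k * t * m = n * t := by rw [← hnm]; ring
      rw [h5, ← lpow_lpow, (ord_spec x).2, lpow_one_elem]
    exact (lpow_eq_one_iff_dvd _ _).1 h4

/-- The `p`-primary part of `x` (a power of `x`). -/
noncomputable def pComp {p : ℕ} (hp : p.Prime) (x : Q) : Q := (exists_decomp hp x).choose

/-- The `p`-coprime part of `x` (a power of `x`). -/
noncomputable def pCo {p : ℕ} (hp : p.Prime) (x : Q) : Q :=
  (exists_decomp hp x).choose_spec.choose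

theorem pComp_spec {p : ℕ} (hp : p.Prime) (x : Q) :
    (∃ i, pComp hp x = lpow x i) ∧ (∃ j, pCo hp x = lpow x j) ∧
      pComp hp x * pCo hp x = x ∧ (∃ k, ord (pComp hp x) = p ^ k) ∧
      ord (pCo hp x) ∣ ord x / p ^ (ord x).factorization p :=
  (exists_decomp hp x).choose_spec.choose_spec

theorem not_dvd_ord_pCo {p : ℕ} (hp : p.Prime) (x : Q) : ¬ p ∣ ord (pCo hp x) := fun h =>
  Nat.not_dvd_ordCompl hp (ord_spec x).1.ne' (h.trans (pComp_spec hp x).2.2.2.2)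

theorem pCo_mul {p : ℕ} (hp : p.Prime) (x y : Q) :
    pCo hp (x * y) = pCo hp x * pCo hp y := by
  -- memberships in the 2-generated subgroup
  have memComp : ∀ z : Q, gen2 x y z → gen2 x y (pComp hp z) := by
    intro z hz
    obtain ⟨i, hi⟩ := (pComp_spec hp z).1
    rw [hi]; exact gen2_lpow hz i
  have memCo : ∀ z : Q, gen2 x y z → gen2 x y (pCo hp z) := by
    intro z hz
    obtain ⟨j, hj⟩ := (pComp_spec hp z).2.1
    rw [hj]; exact gen2_lpow hz j
  have hxy : gen2 x y (x * y) := gen2.mul gen2.fst gen2.snd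
  -- elements of G x y
  set ax : G x y := ⟨pComp hp x, memComp x gen2.fst⟩ with hax
  set bx : G x y := ⟨pCo hp x, memCo x gen2.fst⟩ with hbx
  set ay : G x y := ⟨pComp hp y, memComp y gen2.snd⟩ with hay
  set by' : G x y := ⟨pCo hp y, memCo y gen2.snd⟩ with hby
  set a' : G x y := ⟨pComp hp (x * y), memComp _ hxy⟩ with ha'
  set b' : G x y := ⟨pCo hp (x * y), memCo _ hxy⟩ with hb'
  set A : G x y := ax * ay with hA
  set B : G x y := bx * by' with hB
  have hABeq : A * B = a' * b' := by
    apply Subtype.ext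
    show (ax.1 * ay.1) * (bx.1 * by'.1) = pComp hp (x * y) * pCo hp (x * y)
    have h1 : (ax * ay) * (bx * by') = (ax * bx) * (ay * by') := by
      rw [mul_mul_mul_comm]
    have h2 := congrArg Subtype.val h1
    rw [G.coe_mul, G.coe_mul, G.coe_mul] at h2
    rw [h2, G.coe_mul, G.coe_mul]
    show (pComp hp x * pCo hp x) * (pComp hp y * pCo hp y) = _
    rw [(pComp_spec hp x).2.2.1, (pComp_spec hp y).2.2.1, (pComp_spec hp (x * y)).2.2.1]
  -- order facts
  obtain ⟨kx, hkx⟩ := (pComp_spec hp x).2.2.2.1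
  obtain ⟨ky, hky⟩ := (pComp_spec hp y).2.2.2.1
  obtain ⟨kxy, hkxy⟩ := (pComp_spec hp (x * y)).2.2.2.1
  have hoA : ∃ k, orderOf A = p ^ k := by
    apply pow_of_dvd_lcm_pow (p := p) (ka := kx) (kb := ky) hp
    have h := (Commute.all ax ay).orderOf_mul_dvd_lcm
    rwa [G.orderOf_eq ax, G.orderOf_eq ay, hkx, hky] at h
  have hoB : ¬ p ∣ orderOf B := by
    apply hp_not_dvd_of_dvd_lcm hp (not_dvd_ord_pCo hp x) (not_dvd_ord_pCo hp y)
    have h := (Commute.all bx by').orderOf_mul_dvd_lcm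
    rwa [G.orderOf_eq bx, G.orderOf_eq by'] at h
  have hoa' : orderOf a' = p ^ kxy := by rw [G.orderOf_eq]; exact hkxy
  have hob' : ¬ p ∣ orderOf b' := by rw [G.orderOf_eq]; exact not_dvd_ord_pCo hp (x * y)
  -- uniqueness argument
  have key : a' * (b' * B⁻¹) = a' * (a'⁻¹ * A) := by
    rw [mul_inv_cancel_left]
    calc a' * (b' * B⁻¹) = (a' * b') * B⁻¹ := (mul_assoc _ _ _).symm
      _ = (A * B) * B⁻¹ := by rw [hABeq]
      _ = A := by rw [mul_assoc, mul_inv_cancel, mul_one]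
  have hh := mul_left_cancel key
  -- b' * B⁻¹ has order not divisible by p
  have hBinv : ¬ p ∣ orderOf B⁻¹ := by rwa [orderOf_inv]
  have h1 : ¬ p ∣ orderOf (b' * B⁻¹) :=
    hp_not_dvd_of_dvd_lcm hp hob' hBinv (Commute.all b' B⁻¹).orderOf_mul_dvd_lcm
  -- and is a power of p
  obtain ⟨kA, hkA⟩ := hoA
  have h2 : ∃ k, orderOf (b' * B⁻¹) = p ^ k := by
    rw [hh]
    apply pow_of_dvd_lcm_pow (p := p) (ka := kxy) (kb := kA) hp
    have h := (Commute.all a'⁻¹ A).orderOf_mul_dvd_lcm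
    rwa [orderOf_inv, hoa', hkA] at h
  obtain ⟨k, hk⟩ := h2
  have hk0 : k = 0 := by
    by_contra h0
    exact h1 (hk ▸ dvd_pow_self p h0)
  have horder1 : orderOf (b' * B⁻¹) = 1 := by rw [hk, hk0, pow_zero]
  have hbb : b' = B := mul_inv_eq_one.1 (orderOf_eq_one_iff.1 horder1)
  have := congrArg Subtype.val hbb
  rwa [G.coe_mul] at this

theorem pCo_eq_one {p : ℕ} (hp : p.Prime) {a : Q} (ha : a ∈ primary Q p) : pCo hp a = 1 := by
  obtain ⟨K, hK⟩ := ha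
  have h1 : ord (pCo hp a) ∣ ord a := by
    obtain ⟨j, hj⟩ := (pComp_spec hp a).2.1
    rw [hj]; exact ord_lpow_dvd a j
  rw [hK] at h1
  obtain ⟨k, _, hek⟩ := (Nat.dvd_prime_pow hp).1 h1
  have hk0 : k = 0 := by
    by_contra h0
    exact not_dvd_ord_pCo hp a (hek ▸ dvd_pow_self p h0)
  exact eq_one_of_ord_eq_one (by rw [hek, hk0, pow_zero])

theorem mem_primary_of_pCo_eq_one {p : ℕ} (hp : p.Prime) {d : Q} (hd : pCo hp d = 1) :
    d ∈ primary Q p := by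
  have h := (pComp_spec hp d).2.2.1
  rw [hd, Loop.mul_one] at h
  obtain ⟨k, hk⟩ := (pComp_spec hp d).2.2.2.1
  exact ⟨k, by rw [← h]; exact hk⟩

theorem primary_subloop {p : ℕ} (hp : p.Prime) : IsSubloop (primary Q p) := by
  refine ⟨⟨0, by rw [ord_one', pow_zero]⟩, ?_, ?_⟩
  · rintro a ⟨ka, hka⟩ b ⟨kb, hkb⟩
    have h := ord_mul_dvd_lcm a b
    rw [hka, hkb] at h
    exact pow_of_dvd_lcm_pow hp h
  · rintro a ⟨k, hk⟩
    exact ⟨k, by rw [ord_inv, hk]⟩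

theorem primary_normal {p : ℕ} (hp : p.Prime) : IsNormalSubloop (primary Q p) := by
  refine ⟨primary_subloop hp, ?_⟩
  intro a ha x y d hEq
  apply mem_primary_of_pCo_eq_one hp
  have h1 := congrArg (pCo hp) hEq
  rw [pCo_mul hp (x * y) d, pCo_mul hp x (y * a), pCo_mul hp y a, pCo_eq_one hp ha,
    Loop.mul_one, ← pCo_mul hp x y] at h1
  apply loop_left_cancel (a := pCo hp (x * y))
  rw [h1, Loop.mul_one]

theorem mem_of_subloop {S : Set Q} (hS : IsSubloop S)
    (hsub : ∀ p : ℕ, p.Prime → primary Q p ⊆ S) (x : Q) : x ∈ S := by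
  have main : ∀ N : ℕ, ∀ x : Q, ord x ≤ N → x ∈ S := by
    intro N
    induction N with
    | zero => intro x hx; exact absurd hx (by simpa using (ord_spec x).1.ne')
    | succ N ih =>
      intro x hx
      by_cases h1 : ord x = 1
      · rw [eq_one_of_ord_eq_one h1]; exact hS.1
      · have hn0 : ord x ≠ 0 := (ord_spec x).1.ne'
        have hp : (ord x).minFac.Prime := Nat.minFac_prime h1
        obtain ⟨u, v, ⟨i, hi⟩, ⟨j, hj⟩, huv, ⟨k, hk⟩, hv⟩ := exists_decomp hp x
        have hu : u ∈ S := hsub _ hp ⟨k, hk⟩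
        have hvS : v ∈ S := by
          apply ih
          have hfpos : 0 < (ord x).factorization (ord x).minFac :=
            hp.factorization_pos_of_dvd hn0 (Nat.minFac_dvd _)
          have hmlt : ord x / (ord x).minFac ^ (ord x).factorization (ord x).minFac < ord x :=
            Nat.div_lt_self (ord_spec x).1 (Nat.one_lt_pow hfpos.ne' hp.one_lt)
          have hvle := Nat.le_of_dvd (Nat.ordCompl_pos (ord x).minFac hn0) hv
          omega
        rw [← huv]; exact hS.2.1 u hu v hvS
  exact main (ord x) x le_rfl

theorem gen_univ : genSubloop (⋃ p ∈ {p : ℕ | p.Prime}, primary Q p) = Set.univ := by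
  ext x
  simp only [Set.mem_univ, iff_true, genSubloop, Set.mem_sInter, Set.mem_setOf_eq]
  rintro S ⟨hS, hsub⟩
  refine mem_of_subloop hS (fun p hp z hz => hsub ?_) x
  exact Set.mem_biUnion hp hz

theorem inter_eq_one {p : ℕ} (hp : p.Prime) :
    primary Q p ∩ genSubloop (⋃ q ∈ {q : ℕ | q.Prime ∧ q ≠ p}, primary Q q) = {1} := by
  apply Set.eq_singleton_iff_unique_mem.2
  constructor
  · refine ⟨⟨0, by rw [ord_one', pow_zero]⟩, ?_⟩
    simp only [genSubloop, Set.mem_sInter, Set.mem_setOf_eq]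
    rintro S ⟨hS, -⟩
    exact hS.1
  · rintro z ⟨⟨k, hk⟩, hz2⟩
    have hS0 : IsSubloop {w : Q | ¬ p ∣ ord w} := by
      refine ⟨?_, ?_, ?_⟩
      · show ¬ p ∣ ord (1 : Q)
        rw [ord_one', Nat.dvd_one]
        exact hp.ne_one
      · intro a ha b hb
        exact hp_not_dvd_of_dvd_lcm hp ha hb (ord_mul_dvd_lcm a b)
      · intro a ha
        show ¬ p ∣ ord a⁻¹
        rwa [ord_inv]
    have hzS0 : ¬ p ∣ ord z := by
      simp only [genSubloop, Set.mem_sInter, Set.mem_setOf_eq] at hz2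
      refine hz2 {w : Q | ¬ p ∣ ord w} ⟨hS0, ?_⟩
      intro w hw
      simp only [Set.mem_iUnion, Set.mem_setOf_eq] at hw
      obtain ⟨q, ⟨hq, hqp⟩, hwq⟩ := hw
      obtain ⟨k', hk'⟩ := hwq
      show ¬ p ∣ ord w
      rw [hk']
      intro hpd
      exact hqp (((Nat.prime_dvd_prime_iff_eq hp hq).1 (hp.dvd_of_dvd_pow hpd)).symm)
    rw [hk] at hzS0
    have hk0 : k = 0 := by
      by_contra h0
      exact hzS0 (dvd_pow_self p h0)
    exact eq_one_of_ord_eq_one (by rw [hk, hk0, pow_zero])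

end Aux


/-- A torsion, commutative, diassociative loop is the internal direct product
of its `p`-primary components. -/
theorem statement0 (Q : Type u) [InvLoop Q]
    (hcomm : ∀ x y : Q, x * y = y * x)
    (hdi : Diassociative Q)
    (htor : Torsion Q) :
    (∀ p : ℕ, p.Prime → IsNormalSubloop (primary Q p)) ∧
    genSubloop (⋃ p ∈ {p : ℕ | p.Prime}, primary Q p) = Set.univ ∧
    ∀ p : ℕ, p.Prime →
      primary Q p ∩ genSubloop (⋃ q ∈ {q : ℕ | q.Prime ∧ q ≠ p}, primary Q q) = {1} := by
  letI : Nice Q := { toInvLoop := inferInstance, comm := hcomm, di := hdi, tor := htor }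
  exact ⟨fun p hp => primary_normal hp, gen_univ, fun p hp => inter_eq_one hp⟩


end CRIFPaper
end

section
/- Let c be an element of a flexible IP loop Q. Then: (i) the following three conditions are equivalent: (c·(x·y))·c = (c·x)·(y·c) for all x,y; c·(x·(c·y)) = ((c·x)·c)·y for all x,y; ((y·c)·x)·c = y·((c·x)·c) for all x,y. (ii) The condition x·(c·(x·y)) = ((x·c)·x)·y for all x,y is equivalent to ((y·x)·c)·x = y·((x·c)·x) for all x,y. (iii) The condition (x·c)·(y·x) = (x·(c·y))·x for all x,y is equivalent to ((x·y)·x)·c = x·(y·(x·c)) for all x,y. (iv) The condition (x·y)·(c·x) = (x·(y·c))·x for all x,y is equivalent to c·((x·y)·x) = ((c·x)·y)·x for all x,y. -/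
universe u

namespace CRIFPaper

/-- An inverse property (IP) loop. -/
class IPLoop (Q : Type u) extends Loop Q, Inv Q where
  lip : ∀ x y : Q, x⁻¹ * (x * y) = y
  rip : ∀ x y : Q, (y * x) * x⁻¹ = y

section Aux
variable {Q : Type u} [IPLoop Q]

lemma lp (x y : Q) : x⁻¹ * (x * y) = y := IPLoop.lip x y
lemma rp (x y : Q) : (y * x) * x⁻¹ = y := IPLoop.rip x y

lemma qinv_mul (x : Q) : x⁻¹ * x = 1 := by
  have h := lp x (1 : Q); rwa [Loop.mul_one] at h

lemma qii (x : Q) : x⁻¹⁻¹ = x := by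
  have h := lp x⁻¹ x
  rwa [qinv_mul, Loop.mul_one] at h

lemma il (x y : Q) : x * (x⁻¹ * y) = y := by
  have h := lp x⁻¹ y; rwa [qii] at h

lemma ri (x y : Q) : (y * x⁻¹) * x = y := by
  have h := rp x⁻¹ y; rwa [qii] at h

lemma mir (x y : Q) : (x * y)⁻¹ = y⁻¹ * x⁻¹ := by
  have h1 : (x * y)⁻¹ * x = y⁻¹ := by
    have h := lp (x * y) y⁻¹
    rwa [rp] at h
  have h2 := rp x ((x * y)⁻¹)
  rw [h1] at h2
  exact h2.symm

lemma eq_inv_mul_of {a w z : Q} (h : a * w = z) : w = a⁻¹ * z := by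
  rw [← h, lp]

lemma eq_mul_inv_of {a w z : Q} (h : w * a = z) : w = z * a⁻¹ := by
  rw [← h, rp]

lemma eq_mul_of_inv {x w z : Q} (h : x⁻¹ * w = z) : w = x * z := by
  rw [← h, il]

lemma eq_mul_of_inv' {x w z : Q} (h : w * x⁻¹ = z) : w = z * x := by
  rw [← h, ri]

variable (hflex : ∀ x y : Q, x * (y * x) = (x * y) * x)
include hflex

-- ============ (i) ============
-- A c : (c(xy))c = (cx)(yc); B c : c(x(cy)) = ((cx)c)y; C c : ((yc)x)c = y((cx)c)

lemma v1 (c : Q) (H : ∀ x y : Q, c * (x * (c * y)) = ((c * x) * c) * y) :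
    ∀ x y : Q, c⁻¹ * (x * (c⁻¹ * y)) = ((c⁻¹ * x) * c⁻¹) * y := by
  intro x y
  have h := H x⁻¹ (c⁻¹ * (x * (c⁻¹ * y)))
  rw [il, lp, il] at h
  have h2 := eq_inv_mul_of h.symm
  simp only [mir, qii] at h2
  rw [hflex c⁻¹ x] at h2
  exact h2

lemma v2 (c : Q) (H : ∀ x y : Q, c * (x * (c * y)) = ((c * x) * c) * y) :
    ∀ x y : Q, ((y * c⁻¹) * x) * c⁻¹ = y * ((c⁻¹ * x) * c⁻¹) := by
  intro x y
  have h := congrArg Inv.inv (H x⁻¹ y⁻¹)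
  simp only [mir, qii] at h
  rwa [hflex c⁻¹ x] at h

lemma v3 (c : Q) (H : ∀ x y : Q, ((y * c) * x) * c = y * ((c * x) * c)) :
    ∀ x y : Q, c⁻¹ * (x * (c⁻¹ * y)) = ((c⁻¹ * x) * c⁻¹) * y := by
  intro x y
  have h := congrArg Inv.inv (H x⁻¹ y⁻¹)
  simp only [mir, qii] at h
  rwa [hflex c⁻¹ x] at h

lemma v4 (c : Q) (H : ∀ x y : Q, (c * (x * y)) * c = (c * x) * (y * c)) :
    ∀ x y : Q, ((y * c⁻¹) * x) * c⁻¹ = y * ((c⁻¹ * x) * c⁻¹) := by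
  intro x y
  have h := H y⁻¹ (y * (c⁻¹ * (x * c⁻¹)))
  rw [lp, il, ri] at h
  -- h : x = (c * y⁻¹) * ((y * (c⁻¹ * (x * c⁻¹))) * c)
  have h2 := eq_inv_mul_of h.symm
  have h3 := eq_mul_inv_of h2
  simp only [mir, qii] at h3
  rw [hflex c⁻¹ x] at h3
  exact h3.symm

lemma v6 (c : Q) (H : ∀ x y : Q, ((y * c) * x) * c = y * ((c * x) * c)) :
    ∀ x y : Q, (c⁻¹ * (x * y)) * c⁻¹ = (c⁻¹ * x) * (y * c⁻¹) := by
  intro x y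
  have h := H ((x⁻¹ * c)⁻¹ * (y * c⁻¹)) x⁻¹
  rw [il, ri] at h
  -- h : y = x⁻¹ * ((c * ((x⁻¹*c)⁻¹*(y*c⁻¹))) * c)
  have h2 := eq_mul_of_inv h.symm
  have h3 := eq_mul_inv_of h2
  have h4 := eq_inv_mul_of h3
  simp only [mir, qii] at h4
  rw [hflex c⁻¹ (x * y)] at h4
  exact h4.symm

-- ============ (ii) ============
-- P1 c : x(c(xy)) = ((xc)x)y ; P2 c : ((yx)c)x = y((xc)x)

lemma u1 (c : Q) (H : ∀ x y : Q, x * (c * (x * y)) = ((x * c) * x) * y) :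
    ∀ x y : Q, x * (c⁻¹ * (x * y)) = ((x * c⁻¹) * x) * y := by
  intro x y
  have h := H x⁻¹ (x * (c⁻¹ * (x * y)))
  rw [lp, il, lp] at h
  have h2 := eq_inv_mul_of h.symm
  simp only [mir, qii] at h2
  rw [hflex x c⁻¹] at h2
  exact h2

lemma u2 (c : Q) (H : ∀ x y : Q, x * (c * (x * y)) = ((x * c) * x) * y) :
    ∀ x y : Q, ((y * x) * c⁻¹) * x = y * ((x * c⁻¹) * x) := by
  intro x y
  have h := congrArg Inv.inv (H x⁻¹ y⁻¹)
  simp only [mir, qii] at h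
  rwa [hflex x c⁻¹] at h

lemma u3 (c : Q) (H : ∀ x y : Q, ((y * x) * c) * x = y * ((x * c) * x)) :
    ∀ x y : Q, x * (c⁻¹ * (x * y)) = ((x * c⁻¹) * x) * y := by
  intro x y
  have h := congrArg Inv.inv (H x⁻¹ y⁻¹)
  simp only [mir, qii] at h
  rwa [hflex x c⁻¹] at h

-- ============ (iii)/(iv) ============
-- P3 c : (xc)(yx) = (x(cy))x ; P4 c : ((xy)x)c = x(y(xc))
-- Q3 c : (xy)(cx) = (x(yc))x ; Q4 c : c((xy)x) = ((cx)y)x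

lemma t1 (c : Q) (H : ∀ x y : Q, (x * c) * (y * x) = (x * (c * y)) * x) :
    ∀ x y : Q, (x * y) * (c⁻¹ * x) = (x * (y * c⁻¹)) * x := by
  intro x y
  have h := congrArg Inv.inv (H x⁻¹ y⁻¹)
  simp only [mir, qii] at h
  rwa [hflex x (y * c⁻¹)] at h

lemma t4 (c : Q) (H : ∀ x y : Q, (x * y) * (c * x) = (x * (y * c)) * x) :
    ∀ x y : Q, (x * c⁻¹) * (y * x) = (x * (c⁻¹ * y)) * x := by
  intro x y
  have h := congrArg Inv.inv (H x⁻¹ y⁻¹)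
  simp only [mir, qii] at h
  rwa [hflex x (c⁻¹ * y)] at h

lemma t2 (c : Q) (H : ∀ x y : Q, (x * y) * (c * x) = (x * (y * c)) * x) :
    ∀ x y : Q, ((x * y) * x) * c⁻¹ = x * (y * (x * c⁻¹)) := by
  intro x y
  have h := H x⁻¹ ((x * (y * x)) * c⁻¹)
  rw [ri, lp, rp] at h
  -- h : (x⁻¹ * ((x*(y*x))*c⁻¹)) * (c * x⁻¹) = y
  have h2 := eq_mul_inv_of h
  rw [mir, qii] at h2
  have h3 := eq_mul_of_inv h2
  rw [hflex x y] at h3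
  exact h3

lemma t3 (c : Q) (H : ∀ x y : Q, ((x * y) * x) * c = x * (y * (x * c))) :
    ∀ x y : Q, (x * y) * (c⁻¹ * x) = (x * (y * c⁻¹)) * x := by
  intro x y
  have h := H x⁻¹ (x * ((y * c⁻¹) * x))
  rw [lp, rp, ri] at h
  -- h : y = x⁻¹ * ((x*((y*c⁻¹)*x)) * (x⁻¹ * c))
  have h2 := eq_mul_of_inv h.symm
  have h3 := eq_mul_inv_of h2
  simp only [mir, qii] at h3
  rw [hflex x (y * c⁻¹)] at h3
  exact h3.symm

lemma t5 (c : Q) (H : ∀ x y : Q, (x * c) * (y * x) = (x * (c * y)) * x) :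
    ∀ x y : Q, c⁻¹ * ((x * y) * x) = ((c⁻¹ * x) * y) * x := by
  intro x y
  have h := H x⁻¹ (c⁻¹ * (x * (y * x)))
  rw [il, lp, rp] at h
  -- h : (x⁻¹*c) * ((c⁻¹*(x*(y*x))) * x⁻¹) = y
  have h2 := eq_inv_mul_of h
  rw [mir, qii] at h2
  have h3 := eq_mul_of_inv' h2
  rw [hflex x y] at h3
  exact h3

lemma t6 (c : Q) (H : ∀ x y : Q, c * ((x * y) * x) = ((c * x) * y) * x) :
    ∀ x y : Q, (x * c⁻¹) * (y * x) = (x * (c⁻¹ * y)) * x := by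
  intro x y
  have h := H x⁻¹ (x * ((c⁻¹ * y) * x))
  rw [lp, rp, il] at h
  -- h : y = ((c*x⁻¹) * (x*((c⁻¹*y)*x))) * x⁻¹
  have h2 := eq_mul_of_inv' h.symm
  have h3 := eq_inv_mul_of h2
  simp only [mir, qii] at h3
  rw [hflex x (c⁻¹ * y)] at h3
  exact h3.symm

end Aux

/-- Equivalences among the fixed-variable Moufang conditions in a flexible IP
loop (Lemma on Moufang elements). -/
theorem statement3 (Q : Type u) [IPLoop Q]
    (hflex : ∀ x y : Q, x * (y * x) = (x * y) * x) (c : Q) :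
    -- (i) the three (M0) equations are equivalent
    (((∀ x y : Q, (c * (x * y)) * c = (c * x) * (y * c)) ↔
        (∀ x y : Q, c * (x * (c * y)) = ((c * x) * c) * y)) ∧
      ((∀ x y : Q, c * (x * (c * y)) = ((c * x) * c) * y) ↔
        (∀ x y : Q, ((y * c) * x) * c = y * ((c * x) * c)))) ∧
    -- (ii) the two (M1) equations are equivalent
    ((∀ x y : Q, x * (c * (x * y)) = ((x * c) * x) * y) ↔
      (∀ x y : Q, ((y * x) * c) * x = y * ((x * c) * x))) ∧
    -- (iii) the two (M2) equations are equivalent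
    ((∀ x y : Q, (x * c) * (y * x) = (x * (c * y)) * x) ↔
      (∀ x y : Q, ((x * y) * x) * c = x * (y * (x * c)))) ∧
    -- (iv) the two (M3) equations are equivalent
    ((∀ x y : Q, (x * y) * (c * x) = (x * (y * c)) * x) ↔
      (∀ x y : Q, c * ((x * y) * x) = ((c * x) * y) * x)) := by
  refine ⟨⟨?_, ?_⟩, ?_, ?_, ?_⟩
  · constructor
    · intro H
      simpa only [qii] using v3 hflex c⁻¹ (v4 hflex c H)
    · intro H
      simpa only [qii] using v6 hflex c⁻¹ (v2 hflex c H)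
  · constructor
    · intro H
      simpa only [qii] using v2 hflex c⁻¹ (v1 hflex c H)
    · intro H
      simpa only [qii] using v1 hflex c⁻¹ (v3 hflex c H)
  · constructor
    · intro H
      simpa only [qii] using u2 hflex c⁻¹ (u1 hflex c H)
    · intro H
      simpa only [qii] using u1 hflex c⁻¹ (u3 hflex c H)
  · constructor
    · intro H
      simpa only [qii] using t2 hflex c⁻¹ (t1 hflex c H)
    · intro H
      simpa only [qii] using t4 hflex c⁻¹ (t3 hflex c H)
  · constructor
    · intro H
      simpa only [qii] using t5 hflex c⁻¹ (t4 hflex c H)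
    · intro H
      simpa only [qii] using t1 hflex c⁻¹ (t6 hflex c H)


end CRIFPaper
end

section
/- Let Q be a flexible IP loop. Then M0(Q) ∩ M2(Q) = M0(Q) ∩ M3(Q). -/
universe u

namespace CRIFPaper

/-- Moufang elements of type `M0`. -/
def M0 (Q : Type u) [Mul Q] : Set Q :=
  {c : Q | ∀ x y : Q, (c * (x * y)) * c = (c * x) * (y * c)}

/-- Moufang elements of type `M1`. -/
def M1 (Q : Type u) [Mul Q] : Set Q :=
  {c : Q | ∀ x y : Q, x * (c * (x * y)) = ((x * c) * x) * y}

/-- Moufang elements of type `M2`. -/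
def M2 (Q : Type u) [Mul Q] : Set Q :=
  {c : Q | ∀ x y : Q, (x * c) * (y * x) = (x * (c * y)) * x}

/-- Moufang elements of type `M3`. -/
def M3 (Q : Type u) [Mul Q] : Set Q :=
  {c : Q | ∀ x y : Q, (x * y) * (c * x) = (x * (y * c)) * x}

/-- C elements. -/
def C0 (Q : Type u) [Mul Q] : Set Q :=
  {c : Q | ∀ x y : Q, x * (c * (c * y)) = ((x * c) * c) * y}

/-!
The inverse map is an anti-automorphism of an IP loop, and with flexibility it carries
`M0` into itself and `M3` onto `M2` (`c ∈ M3 ↔ c⁻¹ ∈ M2`). So it suffices to show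
`M0 ∩ M2 ⊆ M3`: the reverse inclusion is its image under inversion. For `c ∈ M0` the
triple `(L_c, R_c, R_c L_c)` is an autotopism, and so are its two companions
`(R_c L_c, L_{c⁻¹}, L_c)` and `(R_{c⁻¹}, R_c L_c, R_c)`; two instances of `M2`, at
`(c x, c⁻¹ y)` and at `(x c⁻¹, y c)`, are then rewritten by these into `M3`.
-/

def Flexible (Q : Type u) [Mul Q] : Prop :=
  ∀ x y : Q, x * (y * x) = (x * y) * x

namespace IPLoop

variable {Q : Type u} [IPLoop Q]

theorem mul_left_cancel {a x y : Q} (h : a * x = a * y) : x = y :=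
  (Loop.mulLeft_bijective a).1 h

theorem mul_inv_cancel (x : Q) : x * x⁻¹ = 1 :=
  mul_left_cancel (a := x⁻¹) ((lip x x⁻¹).trans (Loop.mul_one _).symm)

theorem inv_inv (x : Q) : x⁻¹⁻¹ = x := by
  simpa only [mul_inv_cancel, Loop.one_mul] using rip x⁻¹ x

theorem mul_inv_cancel_left (x y : Q) : x * (x⁻¹ * y) = y := by
  simpa only [inv_inv] using lip x⁻¹ y

theorem mul_inv_cancel_right (x y : Q) : (y * x⁻¹) * x = y := by
  simpa only [inv_inv] using rip x⁻¹ y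

theorem mul_inv_rev (x y : Q) : (x * y)⁻¹ = y⁻¹ * x⁻¹ := by
  have h : y * (x * y)⁻¹ = x⁻¹ := by simpa only [lip] using rip (x * y) x⁻¹
  simpa only [h] using (lip y (x * y)⁻¹).symm

end IPLoop

section FlexibleIPLoop

variable {Q : Type u} [IPLoop Q] {c : Q}

theorem inv_mem_M0 (hf : Flexible Q) (hc : c ∈ M0 Q) : c⁻¹ ∈ M0 Q := by
  intro a b
  have h := congrArg (·⁻¹) (hc b⁻¹ a⁻¹)
  simp only [IPLoop.mul_inv_rev, IPLoop.inv_inv] at h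
  rwa [← hf]

theorem inv_mem_M2_of_mem_M3 (hf : Flexible Q) (hc : c ∈ M3 Q) : c⁻¹ ∈ M2 Q := by
  intro x y
  have h := congrArg (·⁻¹) (hc x⁻¹ y⁻¹)
  simp only [IPLoop.mul_inv_rev, IPLoop.inv_inv] at h
  rwa [hf] at h

theorem mul_mul_mul_inv_mul_of_mem_M0 (hc : c ∈ M0 Q) (a b : Q) :
    ((c * a) * c) * (c⁻¹ * b) = c * (a * b) := by
  have h := hc (a * b) b⁻¹
  rw [IPLoop.rip] at h
  rw [h, ← IPLoop.inv_inv b, ← IPLoop.mul_inv_rev, IPLoop.inv_inv, IPLoop.rip]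

theorem mul_inv_mul_mul_mul_of_mem_M0 (hc : c ∈ M0 Q) (a b : Q) :
    (a * c⁻¹) * ((c * b) * c) = (a * b) * c := by
  have h := hc a⁻¹ (a * b)
  rw [IPLoop.lip] at h
  rw [h, ← IPLoop.inv_inv a, ← IPLoop.mul_inv_rev, IPLoop.inv_inv, IPLoop.lip]

theorem mem_M3_of_mem_M0_of_mem_M2 (hf : Flexible Q) (h0 : c ∈ M0 Q) (h2 : c ∈ M2 Q) :
    c ∈ M3 Q := by
  have h0' := inv_mem_M0 hf h0
  intro x y
  have h2_right : x * ((y * c) * (x * c⁻¹)) = ((x * y) * c) * (x * c⁻¹) := by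
    have h := h2 (x * c⁻¹) (y * c)
    rwa [IPLoop.mul_inv_cancel_right, hf c y, mul_inv_mul_mul_mul_of_mem_M0 h0] at h
  have h2_left : c * ((x * (y * c)) * x) = ((c * x) * y) * (c * x) := by
    have h := h2 (c * x) (c⁻¹ * y)
    have h' := mul_mul_mul_inv_mul_of_mem_M0 h0' (y * c) x
    rw [← hf, IPLoop.rip, IPLoop.inv_inv] at h'
    rwa [IPLoop.mul_inv_cancel_left, h', mul_mul_mul_inv_mul_of_mem_M0 h0, hf] at h
  have h_inv : ((x * (y * c)) * x) * c⁻¹ = x * ((y * c) * (x * c⁻¹)) := by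
    have h := h0' (c * x) (y * (c * x))
    have h' := mul_inv_mul_mul_mul_of_mem_M0 h0' y (c * x)
    rw [IPLoop.inv_inv, IPLoop.lip] at h'
    rwa [hf, ← h2_left, IPLoop.lip, IPLoop.lip, ← h'] at h
  calc (x * y) * (c * x)
      = (x * y) * ((c * (x * c⁻¹)) * c) := by rw [← hf, IPLoop.mul_inv_cancel_right]
    _ = (((x * y) * c) * (x * c⁻¹)) * c := by
        rw [← mul_inv_mul_mul_mul_of_mem_M0 h0 ((x * y) * c), IPLoop.rip]
    _ = (x * (y * c)) * x := by rw [← h2_right, ← h_inv, IPLoop.mul_inv_cancel_right]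

end FlexibleIPLoop

/-- In a flexible IP loop, `M0 ∩ M2 = M0 ∩ M3`. -/
theorem statement5 (Q : Type u) [IPLoop Q]
    (hflex : ∀ x y : Q, x * (y * x) = (x * y) * x) :
    M0 Q ∩ M2 Q = M0 Q ∩ M3 Q := by
  ext c
  constructor
  · rintro ⟨h0, h2⟩
    exact ⟨h0, mem_M3_of_mem_M0_of_mem_M2 hflex h0 h2⟩
  · rintro ⟨h0, h3⟩
    have h3_inv := mem_M3_of_mem_M0_of_mem_M2 hflex (inv_mem_M0 hflex h0)
      (inv_mem_M2_of_mem_M3 hflex h3)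
    exact ⟨h0, by simpa only [IPLoop.inv_inv] using inv_mem_M2_of_mem_M3 hflex h3_inv⟩

end CRIFPaper
end

section
/- Let Q be a flexible C loop. Then M0(Q) = M1(Q) = M2(Q) = M3(Q). -/
universe u

namespace CRIFPaper

/-- Auxiliary class: a flexible C loop. -/
class FCL (Q : Type u) extends Loop Q where
  flex : ∀ x y : Q, x * (y * x) = (x * y) * x
  Cid : ∀ x y z : Q, x * (y * (y * z)) = ((x * y) * y) * z

namespace FCL

variable {Q : Type u} [FCL Q]

theorem lmc {a x y : Q} (h : a * x = a * y) : x = y :=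
  (Loop.mulLeft_bijective a).injective h

theorem rmc {a x y : Q} (h : x * a = y * a) : x = y :=
  (Loop.mulRight_bijective a).injective h

theorem lsurj (a b : Q) : ∃ t, a * t = b := (Loop.mulLeft_bijective a).surjective b

theorem rsurj (a b : Q) : ∃ t, t * a = b := (Loop.mulRight_bijective a).surjective b

/-- inverse -/
noncomputable def inv (a : Q) : Q := Classical.choose (rsurj a 1)

theorem inv_mul (a : Q) : inv a * a = 1 := Classical.choose_spec (rsurj a 1)

theorem lip (a w : Q) : inv a * (a * w) = w := by
  obtain ⟨t, ht⟩ := lsurj a w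
  subst ht
  calc inv a * (a * (a * t)) = ((inv a * a) * a) * t := FCL.Cid _ _ _
    _ = a * t := by rw [inv_mul, Loop.one_mul]

theorem mul_inv (a : Q) : a * inv a = 1 := by
  obtain ⟨t, ht⟩ := lsurj a 1
  have h2 : inv a * 1 = t := by rw [← ht]; exact lip a t
  rw [Loop.mul_one] at h2
  rw [← h2] at ht
  exact ht

theorem lip' (a w : Q) : a * (inv a * w) = w := by
  obtain ⟨t, ht⟩ := lsurj a w
  subst ht
  rw [lip]

theorem inv_inv (a : Q) : inv (inv a) = a := by
  have h1 : inv (inv a) * inv a = 1 := inv_mul (inv a)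
  have h2 : a * inv a = 1 := mul_inv a
  exact rmc (h1.trans h2.symm)

theorem rip (a w : Q) : (w * a) * inv a = w := by
  obtain ⟨t, ht⟩ := rsurj a w
  subst ht
  have := FCL.Cid t a (inv a)
  rw [mul_inv, Loop.mul_one] at this
  exact this.symm

theorem rip' (a w : Q) : (w * inv a) * a = w := by
  have := rip (inv a) w
  rwa [inv_inv] at this

theorem aip (a b : Q) : inv (a * b) = inv b * inv a := by
  have h2 : b * inv (a * b) = inv a := by
    have e1 : b = inv a * (a * b) := (lip a b).symm
    calc b * inv (a * b) = (inv a * (a * b)) * inv (a * b) := by rw [← e1]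
      _ = inv a := rip _ _
  calc inv (a * b) = inv b * (b * inv (a * b)) := (lip b _).symm
    _ = inv b * inv a := by rw [h2]

theorem la (a b : Q) : a * (a * b) = (a * a) * b := by
  have := FCL.Cid 1 a b
  rwa [Loop.one_mul, Loop.one_mul] at this

theorem ra (a b : Q) : (b * a) * a = b * (a * a) := by
  have h := FCL.Cid b a 1
  rw [Loop.mul_one, Loop.mul_one] at h
  exact h.symm

theorem nmu (x a z : Q) : (x * (a * a)) * z = x * ((a * a) * z) := by
  have h := FCL.Cid x a z
  rw [la, ra] at h
  exact h.symm

theorem sq_inv (a : Q) : inv (a * a) = inv a * inv a := aip a a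

theorem sq_mul_inv (a : Q) : (a * a) * inv a = a := rip a a

theorem nlam (a x y : Q) : (a * a) * (x * y) = ((a * a) * x) * y := by
  have h1 : (inv x * (inv a * inv a)) * ((a * a) * (x * y)) = y := by
    rw [nmu (inv x) (inv a), ← sq_inv, lip, lip]
  have h2 : inv ((a * a) * x) = inv x * (inv a * inv a) := by
    rw [aip, sq_inv]
  calc (a * a) * (x * y)
      = ((a * a) * x) * (inv ((a * a) * x) * ((a * a) * (x * y))) := (lip' _ _).symm
    _ = ((a * a) * x) * y := by rw [h2, h1]

theorem nrho (a x y : Q) : (x * y) * (a * a) = x * (y * (a * a)) := by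
  have e1 : ((x * y) * (a * a)) * ((inv a * inv a) * inv y) = x := by
    rw [nmu (x * y) a, ← sq_inv, lip', rip]
  have e2 : (x * (y * (a * a))) * ((inv a * inv a) * inv y) = x := by
    have h : (inv a * inv a) * inv y = inv (y * (a * a)) := by rw [aip, sq_inv]
    rw [h, rip]
  exact rmc (e1.trans e2.symm)

theorem flexL (a z : Q) : inv a * (z * a) = (inv a * z) * a := by
  apply lmc (a := a)
  rw [lip', FCL.flex, lip']

theorem flexR (a z : Q) : a * (z * inv a) = (a * z) * inv a := by
  apply rmc (a := a)
  rw [← FCL.flex, rip', rip']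

theorem f1 (a b : Q) : (a * b) * a = ((a * b) * (a * b)) * inv b := by
  calc (a * b) * a = (a * b) * ((a * b) * inv b) := by rw [rip]
    _ = ((a * b) * (a * b)) * inv b := la _ _

theorem f2 (a b : Q) : a * (b * a) = inv b * ((b * a) * (b * a)) := by
  calc a * (b * a) = (inv b * (b * a)) * (b * a) := by rw [lip]
    _ = inv b * ((b * a) * (b * a)) := ra _ _

theorem s4 (a b : Q) : b * ((a * b) * (a * b)) = ((b * a) * (b * a)) * b := by
  have h : ((a * b) * (a * b)) * inv b = inv b * ((b * a) * (b * a)) := by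
    rw [← f1, ← FCL.flex]
    exact f2 a b
  calc b * ((a * b) * (a * b))
      = b * ((((a * b) * (a * b)) * inv b) * b) := by rw [rip']
    _ = b * ((inv b * ((b * a) * (b * a))) * b) := by rw [h]
    _ = b * (inv b * (((b * a) * (b * a)) * b)) := by rw [← flexL]
    _ = ((b * a) * (b * a)) * b := lip' _ _

theorem s3 (a b : Q) : ((a * b) * (a * b)) * a = a * ((b * a) * (b * a)) :=
  (s4 b a).symm

theorem s1 (a b : Q) : (a * b) * (a * b) = a * (b * (a * b)) := by
  have h := f2 b a
  calc (a * b) * (a * b) = a * (inv a * ((a * b) * (a * b))) := (lip' _ _).symm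
    _ = a * (b * (a * b)) := by rw [← h]

theorem lfact (a b : Q) : (a * a) * (inv a * b) = a * b := by
  rw [nlam, sq_mul_inv]

theorem lswap (a b d : Q) : inv a * ((a * b) * d) = a * ((inv a * b) * d) := by
  rw [← lfact a b, ← nlam, ← la, lip]

/-- The pointwise M1-type statement. -/
def Wp (a b : Q) : Prop := ∀ z, a * (b * (a * z)) = ((a * b) * a) * z

theorem wp_sq {a b : Q} (h : Wp a b) :
    ∀ z, a * (b * (a * (b * z))) = ((a * b) * (a * b)) * z := by
  intro z
  calc a * (b * (a * (b * z))) = ((a * b) * a) * (b * z) := h (b * z)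
    _ = (((a * b) * (a * b)) * inv b) * (b * z) := by rw [← f1]
    _ = ((a * b) * (a * b)) * (inv b * (b * z)) := (nlam _ _ _).symm
    _ = ((a * b) * (a * b)) * z := by rw [lip]

theorem wp_of_sq {a b : Q}
    (h : ∀ z, a * (b * (a * (b * z))) = ((a * b) * (a * b)) * z) : Wp a b := by
  intro z
  calc a * (b * (a * z)) = a * (b * (a * (b * (inv b * z)))) := by rw [lip']
    _ = ((a * b) * (a * b)) * (inv b * z) := h _
    _ = (((a * b) * (a * b)) * inv b) * z := nlam _ _ _
    _ = ((a * b) * a) * z := by rw [← f1]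

theorem wp_symm {a b : Q} (h : Wp a b) : Wp b a := by
  apply wp_of_sq
  intro z
  calc b * (a * (b * (a * z)))
      = inv a * (a * (b * (a * (b * (a * z))))) := by rw [lip]
    _ = inv a * (((a * b) * (a * b)) * (a * z)) := by rw [wp_sq h (a * z)]
    _ = inv a * ((((a * b) * (a * b)) * a) * z) := by rw [nlam]
    _ = inv a * ((a * ((b * a) * (b * a))) * z) := by rw [s3]
    _ = inv a * (a * (((b * a) * (b * a)) * z)) := by rw [nmu]
    _ = ((b * a) * (b * a)) * z := lip _ _

theorem wp_inv {a b : Q} (h : Wp a b) : Wp (inv a) (inv b) := by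
  intro z
  have h1 : ((a * b) * a) * (inv a * (inv b * (inv a * z))) = z := by
    rw [← h (inv a * (inv b * (inv a * z))), lip', lip', lip']
  have h2 : inv ((a * b) * a) * z = inv a * (inv b * (inv a * z)) := by
    calc inv ((a * b) * a) * z
        = inv ((a * b) * a) * (((a * b) * a) * (inv a * (inv b * (inv a * z)))) := by
          rw [h1]
      _ = inv a * (inv b * (inv a * z)) := lip _ _
  have h3 : inv ((a * b) * a) = (inv a * inv b) * inv a := by
    rw [aip, aip, FCL.flex]
  rw [← h2, h3]

theorem atp1 (α β γ : Q → Q) (h : ∀ u v, α u * β v = γ (u * v)) :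
    ∀ u v, γ u * inv (β (inv v)) = α (u * v) := by
  intro u v
  have h1 : α (u * v) * β (inv v) = γ u := by
    rw [h (u * v) (inv v), rip]
  rw [← h1, rip]

theorem atp2 (α β γ : Q → Q) (h : ∀ u v, α u * β v = γ (u * v)) :
    ∀ u v, inv (α (inv u)) * γ v = β (u * v) := by
  intro u v
  have h1 : α (inv u) * β (u * v) = γ v := by
    rw [h (inv u) (u * v), lip]
  rw [← h1, lip]

theorem t2 {c : Q} (hM0 : ∀ x y : Q, (c * (x * y)) * c = (c * x) * (y * c)) :
    ∀ u v : Q, ((c * u) * c) * (inv c * v) = c * (u * v) := by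
  have h := atp1 (fun u => c * u) (fun v => v * c) (fun w => (c * w) * c)
    (fun u v => (hM0 u v).symm)
  intro u v
  have h2 := h u v
  simp only [aip, inv_inv] at h2
  exact h2

theorem m0_to_wp {c : Q} (hM0 : ∀ x y : Q, (c * (x * y)) * c = (c * x) * (y * c)) :
    ∀ u, Wp c u := by
  intro u z
  rw [← t2 hM0 u (c * z), lip]

theorem wp_to_m0 {c : Q} (h : ∀ u, Wp c u) :
    ∀ x y : Q, (c * (x * y)) * c = (c * x) * (y * c) := by
  have h2 : ∀ u v : Q, ((c * u) * c) * (inv c * v) = c * (u * v) := by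
    intro u v
    have h4 := h u (inv c * v)
    rw [lip'] at h4
    exact h4.symm
  have h3 := atp1 (fun w => (c * w) * c) (fun v => inv c * v) (fun w => c * w) h2
  intro x y
  have h5 := h3 x y
  simp only [aip, inv_inv] at h5
  exact h5.symm

theorem m0_inv {c : Q} (hM0 : ∀ x y : Q, (c * (x * y)) * c = (c * x) * (y * c)) :
    ∀ x y : Q, (inv c * (x * y)) * inv c = (inv c * x) * (y * inv c) := by
  intro X Y
  have h := congrArg inv (hM0 (inv Y) (inv X))
  simp only [aip, inv_inv] at h
  calc (inv c * (X * Y)) * inv c = inv c * ((X * Y) * inv c) := (FCL.flex _ _).symm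
    _ = (inv c * X) * (Y * inv c) := h

theorem t1c {c : Q} (hM0 : ∀ x y : Q, (c * (x * y)) * c = (c * x) * (y * c)) :
    ∀ u v : Q, (u * c) * ((inv c * v) * inv c) = (u * v) * inv c := by
  have hm0i := m0_inv hM0
  have h := atp2 (fun x => inv c * x) (fun y => y * inv c)
    (fun w => (inv c * w) * inv c) (fun u v => by exact (hm0i u v).symm)
  intro u v
  have h5 := h u v
  simp only [aip, inv_inv] at h5
  exact h5

/-- The pointwise M2-type statement. -/
def Up (a c : Q) : Prop := ∀ z, (a * c) * (z * a) = (a * (c * z)) * a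

/-- The pointwise M3-type statement. -/
def Vp (a c : Q) : Prop := ∀ z, (a * z) * (c * a) = (a * (z * c)) * a

theorem vp_of_up {a c : Q} (h : Up a c) : Vp (inv a) (inv c) := by
  intro z
  have h1 := congrArg inv (h (inv z))
  simp only [aip, inv_inv] at h1
  calc (inv a * z) * (inv c * inv a) = inv a * ((z * inv c) * inv a) := h1
    _ = (inv a * (z * inv c)) * inv a := FCL.flex _ _

theorem up_of_vp {a c : Q} (h : Vp a c) : Up (inv a) (inv c) := by
  intro z
  have h1 := congrArg inv (h (inv z))
  simp only [aip, inv_inv] at h1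
  calc (inv a * inv c) * (z * inv a) = inv a * ((inv c * z) * inv a) := h1
    _ = (inv a * (inv c * z)) * inv a := FCL.flex _ _

theorem gammaC {c : Q} (hM0 : ∀ x y : Q, (c * (x * y)) * c = (c * x) * (y * c)) :
    ∀ w v : Q, w * (v * c) = (c * ((inv c * w) * v)) * c := by
  intro w v
  rw [hM0 (inv c * w) v, lip']

theorem gammaCi {c : Q} (hM0 : ∀ x y : Q, (c * (x * y)) * c = (c * x) * (y * c)) :
    ∀ w v : Q, w * (v * inv c) = (inv c * ((c * w) * v)) * inv c := by
  intro w v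
  rw [m0_inv hM0 (c * w) v, lip]

theorem t2i {c : Q} (hM0 : ∀ x y : Q, (c * (x * y)) * c = (c * x) * (y * c)) :
    ∀ u v : Q, ((inv c * u) * inv c) * (c * v) = inv c * (u * v) := by
  intro u v
  have h := t2 (m0_inv hM0) u v
  rwa [inv_inv] at h

/-- The key lemma: given `M0`, the identity `x(y(xc)) = ((xy)x)c` holds. -/
theorem m2new {c : Q} (hM0 : ∀ x y : Q, (c * (x * y)) * c = (c * x) * (y * c)) :
    ∀ x y : Q, x * (y * (x * c)) = ((x * y) * x) * c := by
  intro x y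
  calc x * (y * (x * c))
      = x * ((c * ((inv c * y) * x)) * c) := by rw [gammaC hM0 y x]
    _ = x * ((inv c * ((c * y) * x)) * c) := by rw [lswap c y x]
    _ = x * ((((inv c * (c * y)) * inv c) * (c * x)) * c) := by rw [t2i hM0 (c * y) x]
    _ = x * (((y * inv c) * (c * x)) * c) := by rw [lip]
    _ = (c * ((inv c * x) * ((y * inv c) * (c * x)))) * c := by
        rw [gammaC hM0 x ((y * inv c) * (c * x))]
    _ = (inv c * ((c * x) * ((y * inv c) * (c * x)))) * c := by
        rw [lswap c x ((y * inv c) * (c * x))]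
    _ = (inv c * (((c * x) * (y * inv c)) * (c * x))) * c := by
        rw [FCL.flex (c * x) (y * inv c)]
    _ = (inv c * (((inv c * ((c * (c * x)) * y)) * inv c) * (c * x))) * c := by
        rw [gammaCi hM0 (c * x) y]
    _ = (inv c * (inv c * (((c * (c * x)) * y) * x))) * c := by
        rw [t2i hM0 ((c * (c * x)) * y) x]
    _ = ((inv c * inv c) * (((c * (c * x)) * y) * x)) * c := by
        rw [la (inv c) ((((c * (c * x)) * y) * x))]
    _ = ((inv c * inv c) * ((((c * c) * x) * y) * x)) * c := by rw [la c x]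
    _ = ((inv c * inv c) * (((c * c) * (x * y)) * x)) * c := by rw [← nlam c x y]
    _ = ((inv c * inv c) * ((c * c) * ((x * y) * x))) * c := by rw [← nlam c (x * y) x]
    _ = ((inv (c * c)) * ((c * c) * ((x * y) * x))) * c := by rw [← sq_inv c]
    _ = ((x * y) * x) * c := by rw [lip (c * c) ((x * y) * x)]

/-- `M0` together with `m2new` gives `M2`. -/
theorem m0_to_m2 {c : Q} (hM0 : ∀ x y : Q, (c * (x * y)) * c = (c * x) * (y * c)) :
    ∀ x z : Q, (x * c) * (z * x) = (x * (c * z)) * x := by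
  intro x z
  have e1 : (inv c * (c * ((z * x) * c))) * inv c = z * x := by rw [lip, rip]
  calc (x * c) * (z * x)
      = (x * c) * ((inv c * (c * ((z * x) * c))) * inv c) := by rw [e1]
    _ = (x * (c * ((z * x) * c))) * inv c := t1c hM0 x (c * ((z * x) * c))
    _ = (x * ((c * (z * x)) * c)) * inv c := by rw [FCL.flex c (z * x)]
    _ = (x * ((c * z) * (x * c))) * inv c := by rw [hM0 z x]
    _ = (((x * (c * z)) * x) * c) * inv c := by rw [← m2new hM0 x (c * z)]
    _ = (x * (c * z)) * x := rip _ _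

theorem m2_to_m1 {c : Q} (hU : ∀ x y : Q, (x * c) * (y * x) = (x * (c * y)) * x) :
    ∀ a, Wp a c := by
  intro a
  apply wp_of_sq
  intro z
  have u2 : ∀ W : Q, (c * W) * a = inv a * ((a * c) * (W * a)) := by
    intro W
    rw [hU a W, flexL, lip]
  have key : c * (a * (c * z)) = inv a * (((a * c) * (a * c)) * z) := by
    apply rmc (a := a)
    rw [← flexL, u2 (a * (c * z)), ← hU a z, la, nlam]
  rw [key, lip']

end FCL

/-- In a flexible C loop, `M0 = M1 = M2 = M3`. -/
theorem statement9 (Q : Type u) [Loop Q]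
    (hflex : ∀ x y : Q, x * (y * x) = (x * y) * x)
    (hC : ∀ x y z : Q, x * (y * (y * z)) = ((x * y) * y) * z) :
    M0 Q = M1 Q ∧ M1 Q = M2 Q ∧ M2 Q = M3 Q := by
  letI : FCL Q := { ‹Loop Q› with flex := hflex, Cid := hC }
  have hm1_iff_m0 : ∀ c : Q, c ∈ M1 Q ↔ c ∈ M0 Q := by
    intro c
    constructor
    · intro h
      exact FCL.wp_to_m0 (fun u => FCL.wp_symm (h u))
    · intro h
      exact fun x => FCL.wp_symm (FCL.m0_to_wp h x)
  have hm1_to_m2 : ∀ c : Q, c ∈ M1 Q → c ∈ M2 Q := by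
    intro c h
    exact FCL.m0_to_m2 ((hm1_iff_m0 c).mp h)
  have hm2_to_m1 : ∀ c : Q, c ∈ M2 Q → c ∈ M1 Q := by
    intro c h
    exact fun x => FCL.m2_to_m1 h x
  have hm1_inv : ∀ c : Q, c ∈ M1 Q → (FCL.inv c) ∈ M1 Q := by
    intro c h x y
    have h2 := FCL.wp_inv (a := FCL.inv x) (b := c) (fun z => h (FCL.inv x) z)
    rw [FCL.inv_inv] at h2
    exact h2 y
  have hm2_iff_m3 : ∀ c : Q, c ∈ M2 Q ↔ c ∈ M3 Q := by
    intro c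
    constructor
    · intro h
      -- c ∈ M2 ⟹ inv c ∈ M2 ⟹ c ∈ M3
      have hinv : (FCL.inv c) ∈ M2 Q :=
        hm1_to_m2 _ (hm1_inv c (hm2_to_m1 c h))
      intro x y
      have h2 := FCL.vp_of_up (a := FCL.inv x) (c := FCL.inv c)
        (fun z => hinv (FCL.inv x) z)
      rw [FCL.inv_inv, FCL.inv_inv] at h2
      exact h2 y
    · intro h
      -- c ∈ M3 ⟹ inv c ∈ M2 ⟹ c ∈ M2
      have hinv : (FCL.inv c) ∈ M2 Q := by
        intro x y
        have h2 := FCL.up_of_vp (a := FCL.inv x) (c := c) (fun z => h (FCL.inv x) z)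
        rw [FCL.inv_inv] at h2
        exact h2 y
      have h3 := hm1_inv _ (hm2_to_m1 _ hinv)
      rw [FCL.inv_inv] at h3
      exact hm1_to_m2 c h3
  refine ⟨?_, ?_, ?_⟩
  · ext c
    exact (hm1_iff_m0 c).symm
  · ext c
    exact ⟨fun h => hm1_to_m2 c h, fun h => hm2_to_m1 c h⟩
  · ext c
    exact hm2_iff_m3 c

end CRIFPaper
end

section
/- A loop Q is a commutative RIF loop if and only if it is an IP loop satisfying the identity (CRIF): x·((y·y)·(x·z)) = ((x·y)·(x·y))·z for all x,y,z. That is, for a loop Q with inverse map x ↦ x⁻¹: [Q is commutative, has the IP, and satisfies ((x·y)·z)·(x·y) = x·(y·((z·x)·y)) for all x,y,z] if and only if [Q has the IP and satisfies (CRIF)]. -/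
universe u

namespace CRIFPaper

/-- A loop is a commutative RIF loop if and only if it is an IP loop
satisfying the identity (CRIF). -/
theorem statement10 (Q : Type u) [Loop Q] [Inv Q] :
    ((∀ x y : Q, x * y = y * x) ∧
      ((∀ x y : Q, x⁻¹ * (x * y) = y) ∧ (∀ x y : Q, (y * x) * x⁻¹ = y)) ∧
      (∀ x y z : Q, ((x * y) * z) * (x * y) = x * (y * ((z * x) * y)))) ↔
    (((∀ x y : Q, x⁻¹ * (x * y) = y) ∧ (∀ x y : Q, (y * x) * x⁻¹ = y)) ∧
      (∀ x y z : Q, x * ((y * y) * (x * z)) = ((x * y) * (x * y)) * z)) := by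
  constructor
  · rintro ⟨comm, ⟨lip, rip⟩, rif⟩
    refine ⟨⟨lip, rip⟩, ?_⟩
    -- inverse-element basics
    have inv_mul : ∀ x : Q, x⁻¹ * x = 1 := by
      intro x
      have h := lip x 1
      rwa [Loop.mul_one] at h
    -- key consequence of RIF with z := x⁻¹ :  y * (x*y) = x * (y*y)
    have hW : ∀ x y : Q, y * (x * y) = x * (y * y) := by
      intro x y
      have h := rif x y x⁻¹
      rw [inv_mul, Loop.one_mul] at h
      have h2 : (x * y) * x⁻¹ = y := by rw [comm (x * y) x⁻¹, lip]
      rwa [h2] at h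
    -- left alternative law
    have la : ∀ x z : Q, x * (x * z) = (x * x) * z := by
      intro x z
      rw [comm x z, hW z x, comm]
    -- right alternative law
    have ra : ∀ x z : Q, (z * x) * x = z * (x * x) := by
      intro x z
      rw [comm (z * x) x, hW z x]
    -- CRIF
    intro x y z
    have h := rif x y z
    have lhs : ((x * y) * z) * (x * y) = ((x * y) * (x * y)) * z := by
      rw [comm ((x * y) * z) (x * y), la]
    have rhs : x * (y * ((z * x) * y)) = x * ((y * y) * (x * z)) := by
      rw [comm y ((z * x) * y), ra, comm (z * x) (y * y), comm z x]
    rw [lhs, rhs] at h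
    exact h.symm
  · rintro ⟨⟨lip, rip⟩, crif⟩
    -- inverse-element basics
    have inv_mul : ∀ x : Q, x⁻¹ * x = 1 := by
      intro x
      have h := lip x 1
      rwa [Loop.mul_one] at h
    have mul_inv : ∀ x : Q, x * x⁻¹ = 1 := by
      intro x
      have h := rip x 1
      rwa [Loop.one_mul] at h
    have inv_inv : ∀ x : Q, x⁻¹⁻¹ = x := by
      intro x
      have h := lip x⁻¹ x
      rwa [inv_mul, Loop.mul_one] at h
    have xinvmul : ∀ x z : Q, x * (x⁻¹ * z) = z := by
      intro x z
      have h := lip x⁻¹ z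
      rwa [inv_inv] at h
    have lcancel : ∀ a u v : Q, a * u = a * v → u = v := by
      intro a u v h
      calc u = a⁻¹ * (a * u) := (lip a u).symm
        _ = a⁻¹ * (a * v) := by rw [h]
        _ = v := lip a v
    -- antiautomorphic inverse property
    have aip : ∀ x y : Q, (x * y)⁻¹ = y⁻¹ * x⁻¹ := by
      intro x y
      have h1 : y * (x * y)⁻¹ = x⁻¹ := by
        have h := rip (x * y) x⁻¹
        rwa [lip] at h
      have h2 := lip y (x * y)⁻¹
      rw [h1] at h2
      exact h2.symm
    -- left alternative law (CRIF with y := 1)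
    have la : ∀ x z : Q, x * (x * z) = (x * x) * z := by
      intro x z
      have h := crif x 1 z
      rwa [Loop.one_mul, Loop.one_mul, Loop.mul_one] at h
    -- right alternative law, by taking inverses in `la`
    have ra : ∀ x z : Q, (z * x) * x = z * (x * x) := by
      intro x z
      have h := congrArg (Inv.inv) (la x⁻¹ z⁻¹)
      simp only [aip, inv_inv] at h
      exact h
    -- commutativity of inverses: x⁻¹ * y⁻¹ = y⁻¹ * x⁻¹
    have icomm : ∀ x y : Q, x⁻¹ * y⁻¹ = y⁻¹ * x⁻¹ := by
      intro x y
      have h1 := crif x y (x⁻¹ * y⁻¹)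
      rw [xinvmul, rip y y] at h1
      -- h1 : x * y = ((x*y)*(x*y)) * (x⁻¹ * y⁻¹)
      have h2 := rip (x * y) (x * y)
      rw [aip] at h2
      -- h2 : ((x*y)*(x*y)) * (y⁻¹ * x⁻¹) = x * y
      exact lcancel ((x * y) * (x * y)) _ _ (h1.symm.trans h2.symm)
    have comm : ∀ x y : Q, x * y = y * x := by
      intro x y
      have h := icomm x⁻¹ y⁻¹
      rwa [inv_inv, inv_inv] at h
    refine ⟨comm, ⟨lip, rip⟩, ?_⟩
    -- RIF
    intro x y z
    calc ((x * y) * z) * (x * y)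
        = (x * y) * ((x * y) * z) := comm _ _
      _ = ((x * y) * (x * y)) * z := la _ _
      _ = x * ((y * y) * (x * z)) := (crif x y z).symm
      _ = x * ((y * y) * (z * x)) := by rw [comm x z]
      _ = x * ((z * x) * (y * y)) := by rw [comm (y * y) (z * x)]
      _ = x * (((z * x) * y) * y) := by rw [ra]
      _ = x * (y * ((z * x) * y)) := by rw [comm ((z * x) * y) y]

end CRIFPaper
end

section
/- Let Q be a commutative IP loop and let x ∈ M0(Q). Then x³ ∈ Z(Q), where x³ denotes (x·x)·x (which equals x·(x·x) by commutativity). -/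
universe u

namespace CRIFPaper

/-- The center of a loop: elements commuting and associating with everything. -/
def center (Q : Type u) [Mul Q] : Set Q :=
  {a : Q | ∀ x y : Q, a * x = x * a ∧ a * (x * y) = (a * x) * y ∧
    x * (a * y) = (x * a) * y ∧ x * (y * a) = (x * y) * a}

/-- In a commutative IP loop, the cube of any Moufang element is central. -/
theorem statement12 (Q : Type u) [IPLoop Q]
    (hcomm : ∀ x y : Q, x * y = y * x)
    (x : Q) (hx : x ∈ M0 Q) :
    (x * x) * x ∈ center Q := by
  have lcancel : ∀ a u v : Q, a * u = a * v → u = v := fun a u v h =>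
    (Loop.mulLeft_bijective a).injective h
  have mul_inv : ∀ a : Q, a * a⁻¹ = 1 := fun a => by
    have h := IPLoop.rip a (1 : Q); rwa [Loop.one_mul] at h
  have inv_mul : ∀ a : Q, a⁻¹ * a = 1 := fun a => by
    have h := IPLoop.lip a (1 : Q); rwa [Loop.mul_one] at h
  have inv_inv : ∀ a : Q, a⁻¹⁻¹ = a := fun a =>
    lcancel a⁻¹ _ _ (by rw [mul_inv, inv_mul])
  have inv_mul_eq : ∀ a b : Q, (a * b)⁻¹ = a⁻¹ * b⁻¹ := by
    intro a b
    have h1 : b * (a * b)⁻¹ = a⁻¹ := by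
      have h := IPLoop.rip (a * b) a⁻¹
      rwa [IPLoop.lip] at h
    calc (a * b)⁻¹ = b⁻¹ * (b * (a * b)⁻¹) := (IPLoop.lip b _).symm
      _ = b⁻¹ * a⁻¹ := by rw [h1]
      _ = a⁻¹ * b⁻¹ := hcomm _ _
  have A : ∀ u v : Q, x * (x * (u * v)) = (x * u) * (x * v) := by
    intro u v
    have h := hx u v
    rwa [hcomm (x * (u * v)) x, hcomm v x] at h
  have L : ∀ u v : Q, x * (u * v) = (x * (x * u)) * (x⁻¹ * v) := by
    intro u v
    have h := A (u * v) v⁻¹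
    rw [IPLoop.rip] at h
    have h2 : (x * (x * u)) * (x * v⁻¹)⁻¹ = x * (u * v) := by
      rw [h]; exact IPLoop.rip _ _
    rw [inv_mul_eq x v⁻¹, inv_inv] at h2
    exact h2.symm
  have M : ∀ u : Q, ((x * x) * x) * u = x * (x * (x * u)) := by
    intro u
    have h := L x (x * u)
    rw [IPLoop.lip, hcomm x (x * x)] at h
    exact h.symm
  have main : ∀ u v : Q, ((x * x) * x) * (u * v) = (((x * x) * x) * u) * v := by
    intro u v
    rw [M (u * v), A u v, L (x * u) (x * v), IPLoop.lip, ← M u]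
  intro a b
  refine ⟨hcomm _ _, main a b, ?_, ?_⟩
  · calc a * (((x * x) * x) * b) = (((x * x) * x) * b) * a := hcomm _ _
      _ = ((x * x) * x) * (b * a) := (main b a).symm
      _ = ((x * x) * x) * (a * b) := by rw [hcomm b a]
      _ = (((x * x) * x) * a) * b := main a b
      _ = (a * ((x * x) * x)) * b := by rw [hcomm ((x * x) * x) a]
  · calc a * (b * ((x * x) * x)) = a * (((x * x) * x) * b) := by rw [hcomm b]
      _ = (((x * x) * x) * b) * a := hcomm _ _
      _ = ((x * x) * x) * (b * a) := (main b a).symm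
      _ = (b * a) * ((x * x) * x) := hcomm _ _
      _ = (a * b) * ((x * x) * x) := by rw [hcomm b a]



end CRIFPaper
end

section
/- Let (Q,+) be a commutative RIF loop of exponent 6 (i.e., the sixth power of every element is the neutral element 0). Then the operation x·y := (−x)+(−y) makes Q a totally symmetric quasigroup satisfying the identities (Q1) and (Q2). Conversely, let (Q,·) be a totally symmetric quasigroup satisfying (Q1) and (Q2), and let 0 ∈ Q be an idempotent. Then the operation x+y := (0·x)·(0·y) makes Q a commutative RIF loop of exponent 6 with neutral element 0. -/
universe u

namespace CRIFPaper

/-- A quasigroup: all left and right translations are bijections. -/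
class Quasigroup (Q : Type u) extends Mul Q where
  mulLeft_bijective : ∀ a : Q, Function.Bijective (fun x : Q => a * x)
  mulRight_bijective : ∀ a : Q, Function.Bijective (fun x : Q => x * a)

/-- The quasigroup operation `x · y = x⁻¹ * y⁻¹` associated with a loop. -/
def qop {Q : Type u} [Mul Q] [Inv Q] (x y : Q) : Q := x⁻¹ * y⁻¹

/-- The loop operation `x + y = (0 · x) · (0 · y)` associated with a
quasigroup with idempotent `z` (playing the role of `0`). -/
def ladd {Q : Type u} [Mul Q] (z x y : Q) : Q := (z * x) * (z * y)

/-- A commutative RIF loop of exponent 6 yields, via `x · y := (−x)+(−y)`,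
a totally symmetric quasigroup satisfying (Q1) and (Q2); conversely, a totally
symmetric quasigroup satisfying (Q1) and (Q2) with an idempotent `0` yields,
via `x + y := (0·x)·(0·y)`, a commutative RIF loop of exponent 6 with neutral
element `0`. -/
theorem statement18 :
    (∀ (Q : Type u) [IPLoop Q],
      (∀ x y : Q, x * y = y * x) →
      (∀ x y z : Q, ((x * y) * z) * (x * y) = x * (y * ((z * x) * y))) →
      (∀ x : Q, ((((x * x) * x) * x) * x) * x = 1) →
      -- `qop` is a quasigroup operation
      (∀ a : Q, Function.Bijective (fun t : Q => qop a t)) ∧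
      (∀ a : Q, Function.Bijective (fun t : Q => qop t a)) ∧
      -- totally symmetric
      (∀ x y : Q, qop x y = qop y x) ∧
      (∀ x y : Q, qop x (qop x y) = y) ∧
      -- (Q1) and (Q2)
      (∀ x : Q, qop (qop x x) (qop x x) = qop x x) ∧
      (∀ x y w : Q, qop x (qop (qop y y) (qop x w)) =
        qop (qop (qop x y) (qop x y)) w)) ∧
    (∀ (Q : Type u) [Quasigroup Q] (z : Q),
      (∀ x y : Q, x * y = y * x) →
      (∀ x y : Q, x * (x * y) = y) →
      (∀ x : Q, (x * x) * (x * x) = x * x) →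
      (∀ x y w : Q, x * ((y * y) * (x * w)) = ((x * y) * (x * y)) * w) →
      z * z = z →
      -- `ladd z` is a quasigroup operation with neutral element `z`,
      -- so `(Q, ladd z)` is a loop
      (∀ a : Q, Function.Bijective (fun t : Q => ladd z a t)) ∧
      (∀ a : Q, Function.Bijective (fun t : Q => ladd z t a)) ∧
      (∀ x : Q, ladd z z x = x ∧ ladd z x z = x) ∧
      -- commutative
      (∀ x y : Q, ladd z x y = ladd z y x) ∧
      -- inverse property
      (∃ neg : Q → Q, ∀ x y : Q,
        ladd z (neg x) (ladd z x y) = y ∧ ladd z (ladd z y x) (neg x) = y) ∧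
      -- the RIF identity
      (∀ x y w : Q, ladd z (ladd z (ladd z x y) w) (ladd z x y) =
        ladd z x (ladd z y (ladd z (ladd z w x) y))) ∧
      -- exponent 6
      (∀ x : Q, ladd z (ladd z (ladd z (ladd z (ladd z x x) x) x) x) x = z)) := by
  constructor
  · intro Q _inst hcomm hrif hexp6
    have hone_mul : ∀ a : Q, (1 : Q) * a = a := Loop.one_mul
    have hmul_one : ∀ a : Q, a * (1 : Q) = a := Loop.mul_one
    have hlip : ∀ a b : Q, a⁻¹ * (a * b) = b := IPLoop.lip
    have hrip : ∀ a b : Q, (a * b) * b⁻¹ = a := fun a b => IPLoop.rip b a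
    have fa_e20 : ∀ a b : Q, (a * (b * a)⁻¹) = b⁻¹ := fun a b => (Eq.trans (congrArg (fun w : Q => (w * (b * a)⁻¹)) (hlip b a).symm) (hrip b⁻¹ (b * a)))
    have fa_e47 : ∀ a b : Q, (a⁻¹ * b⁻¹) = (b * a)⁻¹ := fun a b => (Eq.trans (congrArg (fun w : Q => (a⁻¹ * w)) (fa_e20 a b).symm) (hlip a (b * a)⁻¹))
    have fa_e7 : ∀ a : Q, (a⁻¹ * a) = (1 : Q) := fun a => (Eq.trans (congrArg (fun w : Q => (a⁻¹ * w)) (hmul_one a).symm) (hlip a (1 : Q)))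
    have fa_e15 : ∀ a : Q, (a * a⁻¹) = (1 : Q) := fun a => (Eq.trans (hcomm a⁻¹ a).symm (fa_e7 a))
    have fa_e23 : ∀ a : Q, ((1 : Q) * a⁻¹⁻¹) = a := fun a => (Eq.trans (congrArg (fun w : Q => (w * a⁻¹⁻¹)) (fa_e15 a).symm) (hrip a a⁻¹))
    have fa_e25 : ∀ a : Q, a⁻¹⁻¹ = a := fun a => (Eq.trans (hone_mul a⁻¹⁻¹).symm (fa_e23 a))
    have antiaut : ∀ x0 x1 : Q, (x0 * x1)⁻¹ = (x0⁻¹ * x1⁻¹) := fun x0 x1 => (Eq.trans (fa_e47 x1 x0).symm (hcomm x1⁻¹ x0⁻¹))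
    have invinv : ∀ x0 : Q, x0⁻¹⁻¹ = x0 := fun x0 => (fa_e25 x0)
    have fb_e22 : ∀ a b : Q, (a * (b * a)⁻¹) = b⁻¹ := fun a b => (Eq.trans (congrArg (fun w : Q => (w * (b * a)⁻¹)) (hlip b a).symm) (hrip b⁻¹ (b * a)))
    have fb_e49 : ∀ a b : Q, (a⁻¹ * b⁻¹) = (b * a)⁻¹ := fun a b => (Eq.trans (congrArg (fun w : Q => (a⁻¹ * w)) (fb_e22 a b).symm) (hlip a (b * a)⁻¹))
    have fb_e11 : ∀ a b : Q, (a⁻¹ * (b * a)) = b := fun a b => (Eq.trans (congrArg (fun w : Q => (a⁻¹ * w)) (hcomm a b).symm) (hlip a b))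
    have fb_e95 : ∀ a b c : Q, ((a⁻¹ * b⁻¹) * (c * (b * a))) = c := fun a b c => (Eq.trans (congrArg (fun w : Q => (w * (c * (b * a)))) (fb_e49 a b)) (fb_e11 (b * a) c))
    have fb_e9 : ∀ a : Q, (a⁻¹ * a) = (1 : Q) := fun a => (Eq.trans (congrArg (fun w : Q => (a⁻¹ * w)) (hmul_one a).symm) (hlip a (1 : Q)))
    have fb_e17 : ∀ a : Q, (a * a⁻¹) = (1 : Q) := fun a => (Eq.trans (hcomm a⁻¹ a).symm (fb_e9 a))
    have fb_e25 : ∀ a : Q, ((1 : Q) * a⁻¹⁻¹) = a := fun a => (Eq.trans (congrArg (fun w : Q => (w * a⁻¹⁻¹)) (fb_e17 a).symm) (hrip a a⁻¹))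
    have fb_e27 : ∀ a : Q, a⁻¹⁻¹ = a := fun a => (Eq.trans (hone_mul a⁻¹⁻¹).symm (fb_e25 a))
    have fb_e28 : ∀ a b : Q, (a * (a⁻¹ * b)) = b := fun a b => (Eq.trans (congrArg (fun w : Q => (w * (a⁻¹ * b))) (fb_e27 a).symm) (hlip a⁻¹ b))
    have fb_e96 : ∀ a b c : Q, ((a * b) * ((b⁻¹ * a⁻¹) * c)) = c := fun a b c => (Eq.trans (congrArg (fun w : Q => ((a * b) * (w * c))) (fb_e49 b a)) (fb_e28 (a * b) c))
    have fb_e608 : ∀ a b c : Q, ((a * b) * c) = (c * (a * b)) := fun a b c => (Eq.trans (congrArg (fun w : Q => ((a * b) * w)) (fb_e95 b a c).symm) (fb_e96 a b (c * (a * b))))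
    have fb_e615 : ∀ a b c : Q, ((a * b) * c) = (c * (b * a)) := fun a b c => (Eq.trans (congrArg (fun w : Q => (w * c)) (hcomm b a).symm) (fb_e608 b a c))
    have fb_e714 : ∀ a b c : Q, (a * (b * c)) = (a * (c * b)) := fun a b c => (Eq.trans (fb_e615 c b a).symm (hcomm (c * b) a))
    have fb_e10 : ∀ a b : Q, a = ((b * a) * b⁻¹) := fun a b => (Eq.trans (hlip b a).symm (hcomm b⁻¹ (b * a)))
    have fb_e9072 : ∀ a b c : Q, ((a * b) * ((a * b) * c)) = (a * (b * ((c * a) * b))) := fun a b c => (Eq.trans (hcomm ((a * b) * c) (a * b)).symm (hrif a b c))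
    have fb_e9111 : ∀ a b : Q, ((a * b) * b) = (a * (b * ((a⁻¹ * a) * b))) := fun a b => (Eq.trans (congrArg (fun w : Q => ((a * b) * w)) (fb_e10 b a)) (fb_e9072 a b a⁻¹))
    have fb_e825 : ∀ a b c d : Q, (a * ((b * c) * d)) = (a * ((c * b) * d)) := fun a b c d => (Eq.trans (congrArg (fun w : Q => (a * w)) (fb_e615 b c d)) (fb_e714 a d (c * b)))
    have fb_e18944 : ∀ a b : Q, (a * (b * a)) = (b * (a * a)) := fun a b => (Eq.trans (Eq.trans (Eq.trans (Eq.trans (hcomm (b * a) a).symm (fb_e9111 b a)) (congrArg (fun w : Q => (b * w)) (fb_e825 a b⁻¹ b a))) (congrArg (fun w : Q => (b * (a * (w * a)))) (fb_e17 b))) (congrArg (fun w : Q => (b * (a * w))) (hone_mul a)))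
    have fb_e9077 : ∀ a b : Q, (a * (b * (a * b))) = ((a * b) * ((a * b) * (1 : Q))) := fun a b => (Eq.trans (congrArg (fun w : Q => (a * (b * (w * b)))) (hone_mul a).symm) (fb_e9072 a b (1 : Q)).symm)
    have fb_e36466 : ∀ a b : Q, (a * (b * (a * b))) = ((a * b) * (a * b)) := fun a b => (Eq.trans (Eq.trans (Eq.trans (fb_e9077 a b) (fb_e714 (a * b) (a * b) (1 : Q))) (fb_e18944 (a * b) (1 : Q))) (hone_mul ((a * b) * (a * b))))
    have fb_e824 : ∀ a b c d : Q, (a * (b * (c * d))) = (a * (b * (d * c))) := fun a b c d => (Eq.trans (congrArg (fun w : Q => (a * w)) (fb_e615 d c b).symm) (fb_e714 a (d * c) b))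
    have fb_e19356 : ∀ a b c : Q, (a * (b * (c * b))) = (a * (c * (b * b))) := fun a b c => (Eq.trans (congrArg (fun w : Q => (a * w)) (fb_e18944 b c)) (fb_e824 a c b b))
    have fb_e18947 : ∀ a b : Q, (a * (b * a)) = ((a * a) * b) := fun a b => (Eq.trans (fb_e18944 a b) (hcomm b (a * a)))
    have fb_e19607 : ∀ a b : Q, (a * (a * b)) = ((a * a) * b) := fun a b => (Eq.trans (congrArg (fun w : Q => (a * w)) (hcomm b a).symm) (fb_e18947 a b))
    have fb_e9104 : ∀ a b : Q, ((a * b) * a) = (a * (b * ((b⁻¹ * a) * b))) := fun a b => (Eq.trans (congrArg (fun w : Q => ((a * b) * w)) (hrip a b).symm) (fb_e9072 a b b⁻¹))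
    have fb_e9725 : ∀ a b : Q, (a * (a * b)) = (a * (b * a)) := fun a b => (Eq.trans (Eq.trans (Eq.trans (hcomm (a * b) a).symm (fb_e9104 a b)) (fb_e824 a b (b⁻¹ * a) b)) (congrArg (fun w : Q => (a * (b * w))) (fb_e28 b a)))
    have fb_e9817 : ∀ a b c : Q, ((a * (b * a)) * c) = (c * (a * (a * b))) := fun a b c => (Eq.trans (congrArg (fun w : Q => (w * c)) (fb_e9725 a b).symm) (fb_e608 a (a * b) c))
    have fb_e10186 : ∀ a b : Q, ((a * a) * b) = (b * (a * (a * (1 : Q)))) := fun a b => (Eq.trans (congrArg (fun w : Q => ((a * w) * b)) (hone_mul a).symm) (fb_e9817 a (1 : Q) b))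
    have fb_e10799 : ∀ a b : Q, ((a * a) * b) = (b * (a * a)) := fun a b => (Eq.trans (fb_e10186 a b) (congrArg (fun w : Q => (b * (a * w))) (hmul_one a)))
    have fb_e10872 : ∀ a b c : Q, ((a * a) * (b * c)) = ((a * a) * (c * b)) := fun a b c => (Eq.trans (fb_e10799 a (b * c)) (fb_e615 b c (a * a)))
    have fb_e19550 : ∀ a b : Q, (a * ((b * b) * a)) = ((b * b) * (a * a)) := fun a b => (Eq.trans (fb_e18944 a (b * b)) (fb_e10872 b a a))
    have fb_e29593 : ∀ a b : Q, (a * (b * (b * a))) = (b * (b * (a * a))) := fun a b => (Eq.trans (Eq.trans (congrArg (fun w : Q => (a * w)) (fb_e19607 b a)) (fb_e19550 a b)) (fb_e19607 b (a * a)).symm)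
    have fb_e19355 : ∀ a b c : Q, (a * (b * (c * c))) = (a * (c * (c * b))) := fun a b c => (Eq.trans (congrArg (fun w : Q => (a * w)) (fb_e18944 c b).symm) (fb_e824 a c b c))
    have fb_e303 : ∀ a : Q, (a * (a * (a * (a * (a * a))))) = (1 : Q) := fun a => (Eq.trans (Eq.trans (Eq.trans (Eq.trans (congrArg (fun w : Q => (a * (a * (a * w)))) (hcomm (a * a) a).symm) (congrArg (fun w : Q => (a * (a * w))) (hcomm ((a * a) * a) a).symm)) (congrArg (fun w : Q => (a * w)) (hcomm (((a * a) * a) * a) a).symm)) (hcomm ((((a * a) * a) * a) * a) a).symm) (hexp6 a))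
    have fb_e305 : ∀ a : Q, (a⁻¹ * (1 : Q)) = (a * (a * (a * (a * a)))) := fun a => (Eq.trans (congrArg (fun w : Q => (a⁻¹ * w)) (fb_e303 a).symm) (hlip a (a * (a * (a * (a * a))))))
    have fb_e3051 : ∀ a : Q, a⁻¹ = (a * (a * (a * (a * a)))) := fun a => (Eq.trans (hmul_one a⁻¹).symm (fb_e305 a))
    have lemLA : ∀ x0 x1 : Q, (x0 * (x0 * x1)) = ((x0 * x0) * x1) := fun x0 x1 => (Eq.trans (Eq.trans (fb_e714 x0 x1 x0).symm (fb_e18944 x0 x1)) (hcomm (x0 * x0) x1).symm)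
    have lemSQ : ∀ x0 x1 : Q, ((x0 * x1) * (x0 * x1)) = ((x0 * x0) * (x1 * x1)) := fun x0 x1 => (Eq.trans (Eq.trans (Eq.trans (Eq.trans (Eq.trans (fb_e36466 x0 x1).symm (fb_e19356 x0 x1 x0)) (fb_e29593 x1 x0).symm) (fb_e19355 x1 x1 x0).symm) (fb_e714 x1 (x0 * x0) x1).symm) (fb_e18944 x1 (x0 * x0)))
    have lemF2 : ∀ x0 : Q, ((x0 * x0) * (x0 * x0)) = (x0 * x0)⁻¹ := fun x0 => (Eq.trans (Eq.trans (Eq.trans (Eq.trans (fb_e18944 x0 (x0 * x0)).symm (fb_e714 x0 (x0 * x0) x0)) (fb_e10 (x0 * (x0 * (x0 * x0))) x0)) (congrArg (fun w : Q => (w * x0⁻¹)) (fb_e3051 x0).symm)) (fb_e49 x0 x0))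
    have fc_e125 : ∀ a b : Q, (a * (a * b)) = (b * (a * a)) := fun a b => (Eq.trans (lemLA a b) (hcomm (a * a) b))
    have fc_e184 : ∀ a b : Q, (a * (b * a)) = (b * (a * a)) := fun a b => (Eq.trans (congrArg (fun w : Q => (a * w)) (hcomm a b).symm) (fc_e125 a b))
    have fc_e3537 : ∀ a b c : Q, ((a * b) * ((a * b) * c)) = (a * (b * ((c * a) * b))) := fun a b c => (Eq.trans (hcomm ((a * b) * c) (a * b)).symm (hrif a b c))
    have fc_e3552 : ∀ a b c : Q, (a * (b * ((a * c) * b))) = ((a * b) * ((a * b) * c)) := fun a b c => (Eq.trans (congrArg (fun w : Q => (a * (b * (w * b)))) (hcomm c a).symm) (fc_e3537 a b c).symm)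
    have fc_e8222 : ∀ a b c : Q, (a * ((a * b) * (c * c))) = ((a * c) * ((a * c) * b)) := fun a b c => (Eq.trans (congrArg (fun w : Q => (a * w)) (fc_e184 c (a * b)).symm) (fc_e3552 a c b))
    have fc_e3551 : ∀ a b c : Q, (a * (b * (b * (c * a)))) = ((a * b) * ((a * b) * c)) := fun a b c => (Eq.trans (congrArg (fun w : Q => (a * (b * w))) (hcomm (c * a) b).symm) (fc_e3537 a b c).symm)
    have fc_e7731 : ∀ a b c : Q, (a * (b * (b * (a * c)))) = ((a * b) * ((a * b) * c)) := fun a b c => (Eq.trans (congrArg (fun w : Q => (a * (b * (b * w)))) (hcomm c a).symm) (fc_e3551 a b c))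
    have fc_e36779 : ∀ a b c : Q, (a * ((a * b) * (c * c))) = (a * (c * (c * (a * b)))) := fun a b c => (Eq.trans (fc_e8222 a b c) (fc_e7731 a c b).symm)
    have fc_e1603 : ∀ a b : Q, ((a * b) * (a * b)) = (a * (a * (b * b))) := fun a b => (Eq.trans (lemSQ a b) (lemLA a (b * b)).symm)
    have fc_e1640 : ∀ a b c : Q, ((a * (a * (b * b))) * c) = ((a * b) * ((a * b) * c)) := fun a b c => (Eq.trans (congrArg (fun w : Q => (w * c)) (fc_e1603 a b).symm) (lemLA (a * b) c).symm)
    have fc_e5619 : ∀ a b c : Q, (((a * a) * (b * b)) * c) = ((b * a) * ((b * a) * c)) := fun a b c => (Eq.trans (congrArg (fun w : Q => (w * c)) (fc_e125 b (a * a)).symm) (fc_e1640 b a c))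
    have fc_e11555 : ∀ a b c : Q, ((a * b) * ((a * b) * c)) = ((b * a) * ((b * a) * c)) := fun a b c => (Eq.trans (Eq.trans (fc_e1640 a b c).symm (congrArg (fun w : Q => (w * c)) (lemLA a (b * b)))) (fc_e5619 a b c))
    have fc_e47651 : ∀ a b c : Q, (a * (b * (b * (a * c)))) = (b * (a * (a * (b * c)))) := fun a b c => (Eq.trans (Eq.trans (fc_e7731 a b c) (fc_e11555 a b c)) (fc_e7731 b a c).symm)
    have fc_e1647 : ∀ a b c : Q, (a * (b * (b * (c * c)))) = ((b * c) * ((b * c) * a)) := fun a b c => (Eq.trans (congrArg (fun w : Q => (a * w)) (fc_e1603 b c).symm) (fc_e125 (b * c) a).symm)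
    have fc_e8064 : ∀ a b c : Q, (a * (b * (b * (c * a)))) = (c * (a * (a * (b * b)))) := fun a b c => (Eq.trans (fc_e3551 a b c) (fc_e1647 c a b).symm)
    have lemQ2p : ∀ x0 x1 x2 : Q, (x0 * ((x1 * x1) * (x0 * x2))) = (((x0 * x1) * (x0 * x1)) * x2) := fun x0 x1 x2 => (Eq.trans (Eq.trans (Eq.trans (Eq.trans (Eq.trans (Eq.trans (Eq.trans (congrArg (fun w : Q => (x0 * w)) (hcomm (x1 * x1) (x0 * x2))) (fc_e36779 x0 x2 x1)) (fc_e47651 x0 x1 x2)) (fc_e47651 x0 x1 x2).symm) (congrArg (fun w : Q => (x0 * (x1 * (x1 * w)))) (hcomm x2 x0).symm)) (fc_e8064 x0 x1 x2)) (congrArg (fun w : Q => (x2 * w)) (fc_e1603 x0 x1).symm)) (hcomm ((x0 * x1) * (x0 * x1)) x2).symm)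
    have GF3 : ∀ a b : Q, (a⁻¹ * (a⁻¹ * b⁻¹)⁻¹) = b := fun a b => (Eq.trans (Eq.trans (Eq.trans (congrArg (fun w : Q => (a⁻¹ * w)) (antiaut a⁻¹ b⁻¹)) (congrArg (fun w : Q => (a⁻¹ * (w * b⁻¹⁻¹))) (invinv a))) (congrArg (fun w : Q => (a⁻¹ * (a * w))) (invinv b))) (hlip a b))
    have GF1 : ∀ a : Q, ((a⁻¹ * a⁻¹)⁻¹ * (a⁻¹ * a⁻¹)⁻¹) = (a⁻¹ * a⁻¹) := fun a => (Eq.trans (Eq.trans (Eq.trans (Eq.trans (Eq.trans (Eq.trans (Eq.trans (congrArg (fun w : Q => (w * (a⁻¹ * a⁻¹)⁻¹)) (antiaut a⁻¹ a⁻¹)) (congrArg (fun w : Q => ((w * a⁻¹⁻¹) * (a⁻¹ * a⁻¹)⁻¹)) (invinv a))) (congrArg (fun w : Q => ((a * w) * (a⁻¹ * a⁻¹)⁻¹)) (invinv a))) (congrArg (fun w : Q => ((a * a) * w)) (antiaut a⁻¹ a⁻¹))) (congrArg (fun w : Q => ((a * a) * (w * a⁻¹⁻¹))) (invinv a))) (congrArg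 (fun w : Q => ((a * a) * (a * w))) (invinv a))) (lemF2 a)) (antiaut a a))
    have GF2L : ∀ a b c : Q, (a⁻¹ * ((b⁻¹ * b⁻¹)⁻¹ * (a⁻¹ * c⁻¹)⁻¹)⁻¹) = (((a⁻¹ * b⁻¹) * (a⁻¹ * b⁻¹)) * c⁻¹) := fun a b c => (Eq.trans (Eq.trans (Eq.trans (congrArg (fun w : Q => (a⁻¹ * w)) (antiaut (b⁻¹ * b⁻¹)⁻¹ (a⁻¹ * c⁻¹)⁻¹)) (congrArg (fun w : Q => (a⁻¹ * (w * (a⁻¹ * c⁻¹)⁻¹⁻¹))) (invinv (b⁻¹ * b⁻¹)))) (congrArg (fun w : Q => (a⁻¹ * ((b⁻¹ * b⁻¹) * w))) (invinv (a⁻¹ * c⁻¹)))) (lemQ2p a⁻¹ b⁻¹ c⁻¹))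
    have GF2R : ∀ a b c : Q, (((a⁻¹ * b⁻¹)⁻¹ * (a⁻¹ * b⁻¹)⁻¹)⁻¹ * c⁻¹) = (((a⁻¹ * b⁻¹) * (a⁻¹ * b⁻¹)) * c⁻¹) := fun a b c => (Eq.trans (Eq.trans (congrArg (fun w : Q => (w * c⁻¹)) (antiaut (a⁻¹ * b⁻¹)⁻¹ (a⁻¹ * b⁻¹)⁻¹)) (congrArg (fun w : Q => ((w * (a⁻¹ * b⁻¹)⁻¹⁻¹) * c⁻¹)) (invinv (a⁻¹ * b⁻¹)))) (congrArg (fun w : Q => (((a⁻¹ * b⁻¹) * w) * c⁻¹)) (invinv (a⁻¹ * b⁻¹))))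
    have GF2 : ∀ x y w : Q, x⁻¹ * ((y⁻¹ * y⁻¹)⁻¹ * (x⁻¹ * w⁻¹)⁻¹)⁻¹ = ((x⁻¹ * y⁻¹)⁻¹ * (x⁻¹ * y⁻¹)⁻¹)⁻¹ * w⁻¹ := fun x y w => (GF2L x y w).trans (GF2R x y w).symm
    have invbij : Function.Bijective (fun t : Q => t⁻¹) := Function.Involutive.bijective (fun t => invinv t)
    refine ⟨?_, ?_, ?_, ?_, ?_, ?_⟩
    · intro a
      exact (Loop.mulLeft_bijective a⁻¹).comp invbij
    · intro a
      have e : (fun t : Q => qop t a) = (fun t : Q => qop a t) := funext (fun t => hcomm t⁻¹ a⁻¹)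
      rw [e]; exact (Loop.mulLeft_bijective a⁻¹).comp invbij
    · intro x y; exact hcomm x⁻¹ y⁻¹
    · intro x y; exact GF3 x y
    · intro x; exact GF1 x
    · intro x y w; exact GF2 x y w
  · intro Q _inst z hcomm hT hQ1 hQ2 hzz
    have ra_e6 : ∀ a b : Q, (a * (b * a)) = b := fun a b => (Eq.trans (congrArg (fun w : Q => (a * w)) (hcomm a b).symm) (hT a b))
    have ra_e15 : ∀ a b c : Q, (a * ((b * b) * (a * c))) = (c * ((a * b) * (a * b))) := fun a b c => (Eq.trans (hQ2 a b c) (hcomm ((a * b) * (a * b)) c))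
    have ra_e866 : ∀ a b : Q, (a * a) = ((b * b) * ((a * b) * (a * b))) := fun a b => (Eq.trans (congrArg (fun w : Q => (a * w)) (ra_e6 (b * b) a).symm) (ra_e15 a b (b * b)))
    have ra_e1009 : ∀ a : Q, (z * ((a * z) * (a * z))) = (a * a) := fun a => (Eq.trans (congrArg (fun w : Q => (w * ((a * z) * (a * z)))) (hzz).symm) (ra_e866 a z).symm)
    have ra_e1066 : ∀ a : Q, (z * ((z * a) * (a * z))) = (a * a) := fun a => (Eq.trans (congrArg (fun w : Q => (z * (w * (a * z)))) (hcomm a z).symm) (ra_e1009 a))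
    have ra_e1104 : ∀ a : Q, (z * ((z * a) * (z * a))) = (a * a) := fun a => (Eq.trans (congrArg (fun w : Q => (z * ((z * a) * w))) (hcomm a z).symm) (ra_e1066 a))
    have ra_e851 : ∀ a b : Q, (a * (z * (a * b))) = (b * ((a * z) * (a * z))) := fun a b => (Eq.trans (congrArg (fun w : Q => (a * (w * (a * b)))) (hzz).symm) (ra_e15 a z b))
    have ra_e1068 : ∀ a : Q, (z * (a * a)) = ((a * z) * (a * z)) := fun a => (Eq.trans (congrArg (fun w : Q => (z * w)) (ra_e1009 a).symm) (hT z ((a * z) * (a * z))))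
    have ra_e3062 : ∀ a b : Q, (a * (z * (a * b))) = (b * (z * (a * a))) := fun a b => (Eq.trans (ra_e851 a b) (congrArg (fun w : Q => (b * w)) (ra_e1068 a).symm))
    have ra_e3065 : ∀ a b : Q, (a * (z * (b * a))) = (b * (z * (a * a))) := fun a b => (Eq.trans (congrArg (fun w : Q => (a * (z * w))) (hcomm a b).symm) (ra_e3062 a b))
    have ra_e3386 : ∀ a b : Q, ((z * (a * b)) * (a * (z * (b * b)))) = b := fun a b => (Eq.trans (congrArg (fun w : Q => ((z * (a * b)) * w)) (ra_e3065 b a).symm) (ra_e6 (z * (a * b)) b))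
    have ra_e5156 : ∀ a b : Q, ((z * (a * (z * b))) * (a * (b * b))) = (z * b) := fun a b => (Eq.trans (congrArg (fun w : Q => ((z * (a * (z * b))) * (a * w))) (ra_e1104 b).symm) (ra_e3386 a (z * b)))
    have ra_e26522 : ∀ a b : Q, ((a * (b * b)) * (z * b)) = (z * (a * (z * b))) := fun a b => (Eq.trans (congrArg (fun w : Q => ((a * (b * b)) * w)) (ra_e5156 a b).symm) (ra_e6 (a * (b * b)) (z * (a * (z * b)))))
    have ra_e3064 : ∀ a b : Q, (a * (z * (a * b))) = ((z * (a * a)) * b) := fun a b => (Eq.trans (ra_e3062 a b) (hcomm b (z * (a * a))))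
    have ra_e1261 : ∀ a : Q, (z * (a * a)) = ((z * a) * (z * a)) := fun a => (Eq.trans (congrArg (fun w : Q => (z * w)) (ra_e1104 a).symm) (hT z ((z * a) * (z * a))))
    have ra_e1477 : ∀ a b : Q, ((z * (a * a)) * b) = (z * ((a * a) * (z * b))) := fun a b => (Eq.trans (congrArg (fun w : Q => (w * b)) (ra_e1261 a)) (hQ2 z a b).symm)
    have ra_e21797 : ∀ a b : Q, (a * (z * (a * b))) = (z * ((a * a) * (z * b))) := fun a b => (Eq.trans (ra_e3064 a b) (ra_e1477 a b))
    have ra_e21798 : ∀ a b : Q, (z * ((z * a) * (b * b))) = (b * (z * (b * a))) := fun a b => (Eq.trans (congrArg (fun w : Q => (z * w)) (hcomm (b * b) (z * a)).symm) (ra_e21797 b a).symm)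
    have ra_e27565 : ∀ a b : Q, (z * (a * (z * (a * b)))) = ((z * b) * (a * a)) := fun a b => (Eq.trans (congrArg (fun w : Q => (z * w)) (ra_e21798 b a).symm) (hT z ((z * b) * (a * a))))
    have ra_e44075 : ∀ a b : Q, (a * (b * b)) = (z * (b * (z * (b * (z * a))))) := fun a b => (Eq.trans (congrArg (fun w : Q => (w * (b * b))) (hT z a).symm) (ra_e27565 b (z * a)).symm)
    have ra_e3384 : ∀ a b : Q, ((a * b) * (z * b)) = (a * (z * ((a * b) * (a * b)))) := fun a b => (Eq.trans (congrArg (fun w : Q => ((a * b) * (z * w))) (hT a b).symm) (ra_e3065 (a * b) a))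
    have ra_e860 : ∀ a b c : Q, (a * (b * ((a * c) * (a * c)))) = ((c * c) * (a * b)) := fun a b c => (Eq.trans (congrArg (fun w : Q => (a * w)) (ra_e15 a c b).symm) (hT a ((c * c) * (a * b))))
    have ra_e21800 : ∀ a b : Q, (z * (a * (z * (a * b)))) = ((a * a) * (z * b)) := fun a b => (Eq.trans (congrArg (fun w : Q => (z * w)) (ra_e21797 a b)) (hT z ((a * a) * (z * b))))
    have ra_e28204 : ∀ a b : Q, ((a * a) * b) = (z * (a * (z * (a * (z * b))))) := fun a b => (Eq.trans (congrArg (fun w : Q => ((a * a) * w)) (hT z b).symm) (ra_e21800 a (z * b)).symm)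
    have ra_e88977 : ∀ a b c : Q, (a * (b * ((a * c) * (a * c)))) = (z * (c * (z * (c * (z * (a * b)))))) := fun a b c => (Eq.trans (ra_e860 a b c) (ra_e28204 c (a * b)))
    have ra_e94486 : ∀ a b : Q, ((a * b) * (z * b)) = (z * (b * (z * (b * a)))) := fun a b => (Eq.trans (Eq.trans (ra_e3384 a b) (ra_e88977 a z b)) (congrArg (fun w : Q => (z * (b * (z * (b * w))))) (ra_e6 z a)))
    have ra_e94490 : ∀ a b : Q, ((a * b) * (z * (b * (z * (b * a))))) = (z * b) := fun a b => (Eq.trans (congrArg (fun w : Q => ((a * b) * w)) (ra_e94486 a b).symm) (hT (a * b) (z * b)))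
    have ra_e97066 : ∀ a b : Q, (((z * a) * b) * (a * (b * b))) = (z * b) := fun a b => (Eq.trans (congrArg (fun w : Q => (((z * a) * b) * w)) (ra_e44075 a b)) (ra_e94490 (z * a) b))
    have ra_e97148 : ∀ a b : Q, ((a * (b * b)) * (z * b)) = ((z * a) * b) := fun a b => (Eq.trans (congrArg (fun w : Q => ((a * (b * b)) * w)) (ra_e97066 a b).symm) (ra_e6 (a * (b * b)) ((z * a) * b)))
    have ra_e99382 : ∀ a b : Q, (z * (a * (z * b))) = ((z * a) * b) := fun a b => (Eq.trans (ra_e26522 a b).symm (ra_e97148 a b))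
    have lemN : ∀ x0 x1 : Q, ((z * x0) * (z * x1)) = (z * (x0 * x1)) := fun x0 x1 => (Eq.trans (ra_e99382 x0 (z * x1)).symm (congrArg (fun w : Q => (z * (x0 * w))) (hT z x1)))
    have rb_e20 : ∀ a b : Q, ((z * a) * b) = (z * (a * (z * b))) := fun a b => (Eq.trans (congrArg (fun w : Q => ((z * a) * w)) (hT z b).symm) (lemN a (z * b)))
    have rb_e16 : ∀ a b : Q, ((a * z) * (z * b)) = (z * (a * b)) := fun a b => (Eq.trans (congrArg (fun w : Q => (w * (z * b))) (hcomm z a).symm) (lemN a b))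
    have rb_e82 : ∀ a b : Q, ((a * z) * (b * z)) = (z * (a * b)) := fun a b => (Eq.trans (congrArg (fun w : Q => ((a * z) * w)) (hcomm z b).symm) (rb_e16 a b))
    have rb_e28967 : ∀ a b : Q, ((z * (a * a)) * b) = (a * ((z * z) * (a * b))) := fun a b => (Eq.trans (congrArg (fun w : Q => (w * b)) (rb_e82 a a).symm) (hQ2 a z b).symm)
    have rb_e37971 : ∀ a b : Q, (z * ((a * a) * (z * b))) = (a * (z * (a * b))) := fun a b => (Eq.trans (Eq.trans (Eq.trans (rb_e20 (a * a) b).symm (rb_e28967 a b)) (congrArg (fun w : Q => (a * w)) (rb_e20 z (a * b)))) (congrArg (fun w : Q => (a * w)) (hT z (z * (a * b)))))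
    have rb_e19 : ∀ a b : Q, (a * (z * b)) = (z * ((z * a) * b)) := fun a b => (Eq.trans (congrArg (fun w : Q => (w * (z * b))) (hT z a).symm) (lemN (z * a) b))
    have rb_e108 : ∀ a b : Q, (z * (a * (z * b))) = (b * (z * a)) := fun a b => (Eq.trans (congrArg (fun w : Q => (z * w)) (hcomm (z * b) a).symm) (rb_e19 b a).symm)
    have rb_e38010 : ∀ a b : Q, (a * (z * (a * b))) = (b * (z * (a * a))) := fun a b => (Eq.trans (rb_e37971 a b).symm (rb_e108 (a * a) b))
    have rb_e15 : ∀ a b : Q, (z * (a * b)) = ((z * b) * (z * a)) := fun a b => (Eq.trans (lemN a b).symm (hcomm (z * a) (z * b)))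
    have rb_e27 : ∀ a b : Q, (z * (a * b)) = (z * (b * a)) := fun a b => (Eq.trans (rb_e15 a b) (lemN b a))
    have lemH1 : ∀ x0 x1 : Q, ((x0 * x1) * (z * x0)) = (z * ((z * (x0 * x0)) * x1)) := fun x0 x1 => (Eq.trans (Eq.trans (Eq.trans (hcomm (x0 * x1) (z * x0)) (rb_e20 x0 (x0 * x1))) (congrArg (fun w : Q => (z * w)) (rb_e38010 x0 x1))) (rb_e27 (z * (x0 * x0)) x1).symm)
    have rc_e15 : ∀ a b : Q, (z * (a * b)) = ((z * b) * (z * a)) := fun a b => (Eq.trans (lemN a b).symm (hcomm (z * a) (z * b)))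
    have rc_e27 : ∀ a b : Q, (z * (a * b)) = (z * (b * a)) := fun a b => (Eq.trans (rc_e15 a b) (lemN b a))
    have rc_e33 : ∀ a b c : Q, ((z * (a * b)) * (z * c)) = (z * ((b * a) * c)) := fun a b c => (Eq.trans (congrArg (fun w : Q => (w * (z * c))) (rc_e27 b a).symm) (lemN (b * a) c))
    have rc_e971 : ∀ a b c : Q, (z * ((a * b) * c)) = (z * ((b * a) * c)) := fun a b c => (Eq.trans (lemN (a * b) c).symm (rc_e33 a b c))
    have rc_e972 : ∀ a b c : Q, (z * (a * (b * c))) = (z * ((c * b) * a)) := fun a b c => (Eq.trans (congrArg (fun w : Q => (z * w)) (hcomm (b * c) a).symm) (rc_e971 b c a))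
    have rc_e1053 : ∀ a b c : Q, (z * (a * (b * c))) = (z * (a * (c * b))) := fun a b c => (Eq.trans (congrArg (fun w : Q => (z * w)) (hcomm (b * c) a).symm) (rc_e972 a c b).symm)
    have rc_e20 : ∀ a b : Q, ((z * a) * b) = (z * (a * (z * b))) := fun a b => (Eq.trans (congrArg (fun w : Q => ((z * a) * w)) (hT z b).symm) (lemN a (z * b)))
    have rc_e973 : ∀ a b c : Q, (z * (z * ((a * b) * c))) = ((b * a) * c) := fun a b c => (Eq.trans (congrArg (fun w : Q => (z * w)) (rc_e971 b a c).symm) (hT z ((b * a) * c)))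
    have rc_e1216 : ∀ a b c : Q, ((a * b) * c) = ((b * a) * c) := fun a b c => (Eq.trans (hT z ((a * b) * c)).symm (rc_e973 a b c))
    have rc_e1218 : ∀ a b c : Q, ((a * b) * c) = (c * (b * a)) := fun a b c => (Eq.trans (rc_e1216 b a c).symm (hcomm (b * a) c))
    have rc_e1267 : ∀ a b c : Q, (a * (b * c)) = (a * (c * b)) := fun a b c => (Eq.trans (rc_e1218 c b a).symm (hcomm (c * b) a))
    have rc_e1615 : ∀ a b c : Q, (a * (z * (b * (z * c)))) = (a * (c * (z * b))) := fun a b c => (Eq.trans (congrArg (fun w : Q => (a * w)) (rc_e20 b c).symm) (rc_e1267 a (z * b) c))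
    have rc_e16 : ∀ a b : Q, ((a * z) * (z * b)) = (z * (a * b)) := fun a b => (Eq.trans (congrArg (fun w : Q => (w * (z * b))) (hcomm z a).symm) (lemN a b))
    have rc_e82 : ∀ a b : Q, ((a * z) * (b * z)) = (z * (a * b)) := fun a b => (Eq.trans (congrArg (fun w : Q => ((a * z) * w)) (hcomm z b).symm) (rc_e16 a b))
    have rc_e28967 : ∀ a b : Q, ((z * (a * a)) * b) = (a * ((z * z) * (a * b))) := fun a b => (Eq.trans (congrArg (fun w : Q => (w * b)) (rc_e82 a a).symm) (hQ2 a z b).symm)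
    have rc_e37971 : ∀ a b : Q, (z * ((a * a) * (z * b))) = (a * (z * (a * b))) := fun a b => (Eq.trans (Eq.trans (Eq.trans (rc_e20 (a * a) b).symm (rc_e28967 a b)) (congrArg (fun w : Q => (a * w)) (rc_e20 z (a * b)))) (congrArg (fun w : Q => (a * w)) (hT z (z * (a * b)))))
    have rc_e7 : ∀ a b : Q, (a * (b * a)) = b := fun a b => (Eq.trans (congrArg (fun w : Q => (a * w)) (hcomm a b).symm) (hT a b))
    have rc_e19 : ∀ a b : Q, (a * (z * b)) = (z * ((z * a) * b)) := fun a b => (Eq.trans (congrArg (fun w : Q => (w * (z * b))) (hT z a).symm) (lemN (z * a) b))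
    have rc_e112 : ∀ a b : Q, (z * a) = (b * (z * (a * (z * b)))) := fun a b => (Eq.trans (congrArg (fun w : Q => (z * w)) (rc_e7 (z * b) a).symm) (rc_e19 b (a * (z * b))).symm)
    have rc_e38016 : ∀ a b : Q, (a * (b * (z * (b * a)))) = (z * (b * b)) := fun a b => (Eq.trans (congrArg (fun w : Q => (a * w)) (rc_e37971 b a).symm) (rc_e112 (b * b) a).symm)
    have rc_e39275 : ∀ a b : Q, (a * (b * (z * (a * b)))) = (z * (b * b)) := fun a b => (Eq.trans (congrArg (fun w : Q => (a * (b * (z * w)))) (hcomm b a).symm) (rc_e38016 a b))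
    have rc_e110 : ∀ a : Q, (a * (z * z)) = (z * a) := fun a => (Eq.trans (rc_e19 a z) (rc_e7 z (z * a)))
    have rc_e129 : ∀ a : Q, (a * z) = (z * a) := fun a => (Eq.trans (congrArg (fun w : Q => (a * w)) (hzz).symm) (rc_e110 a))
    have rc_e28922 : ∀ a b : Q, ((a * a) * b) = (a * ((a * a) * (a * b))) := fun a b => (Eq.trans (congrArg (fun w : Q => (w * b)) (hQ1 a).symm) (hQ2 a a b).symm)
    have rc_e29667 : ∀ a : Q, (a * ((a * a) * (z * a))) = ((a * a) * z) := fun a => (Eq.trans (congrArg (fun w : Q => (a * ((a * a) * w))) (rc_e129 a).symm) (rc_e28922 a z).symm)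
    have rc_e31876 : ∀ a : Q, (a * (z * (a * (z * (a * a))))) = (z * (a * a)) := fun a => (Eq.trans (Eq.trans (rc_e1615 a a (a * a)) (rc_e29667 a)) (hcomm (a * a) z))
    have rc_e24 : ∀ a b : Q, ((z * a) * b) = (z * (a * (b * z))) := fun a b => (Eq.trans (congrArg (fun w : Q => ((z * a) * w)) (rc_e7 z b).symm) (lemN a (b * z)))
    have rc_e187 : ∀ a b : Q, (z * (a * (z * b))) = (z * (a * (b * z))) := fun a b => (Eq.trans (rc_e20 a b).symm (rc_e24 a b))
    have rc_e1220 : ∀ a b c : Q, ((a * b) * (c * (b * a))) = c := fun a b c => (Eq.trans (rc_e1216 b a (c * (b * a))).symm (rc_e7 (b * a) c))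
    have rc_e1511 : ∀ a b c : Q, ((z * (a * b)) * (c * ((b * a) * z))) = c := fun a b c => (Eq.trans (congrArg (fun w : Q => (w * (c * ((b * a) * z)))) (rc_e27 b a).symm) (rc_e1220 z (b * a) c))
    have rc_e6008 : ∀ a b c : Q, (z * ((a * b) * (z * (c * (z * (b * a)))))) = c := fun a b c => (Eq.trans (Eq.trans (congrArg (fun w : Q => (z * ((a * b) * w))) (rc_e187 c (b * a))) (rc_e20 (a * b) (c * ((b * a) * z))).symm) (rc_e1511 a b c))
    have rc_e38125 : ∀ a b : Q, (a * (z * (a * (b * (z * (a * a)))))) = b := fun a b => (Eq.trans (rc_e37971 a (b * (z * (a * a)))).symm (rc_e6008 a a b))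
    have lemX6 : ∀ x0 : Q, ((z * ((z * ((z * ((z * ((z * x0) * (z * x0))) * (z * x0))) * (z * x0))) * (z * x0))) * (z * x0)) = z := fun x0 => (Eq.trans (Eq.trans (Eq.trans (Eq.trans (Eq.trans (Eq.trans (Eq.trans (Eq.trans (Eq.trans (Eq.trans (Eq.trans (Eq.trans (hcomm (z * ((z * ((z * ((z * ((z * x0) * (z * x0))) * (z * x0))) * (z * x0))) * (z * x0))) (z * x0)) (lemN x0 ((z * ((z * ((z * ((z * x0) * (z * x0))) * (z * x0))) * (z * x0))) * (z * x0)))) (rc_e1053 x0 (z * ((z * ((z * ((z * x0) * (z * x0))) * (z * x0))) * (z * x0))) (z * x0))) (congrArg (fun w : Q => (z * (x0 * w))) (lemN x0 ((z * ((z * ((z * x0) * (z * x0))) * (z * x0))) * (z * x0))))) (congrArg (fun w : Q => (z * (x0 * w))) (rc_e1053 x0 (z * ((z * ((z * x0) * (z * x0))) * (z * x0))) (z * x0)))) (congrArg (fun w : Q => (z * (x0 * (z * (x0 * w))))) (lemN x0 ((z * ((z * x0) * (z * x0))) * (z * x0))))) (congrArg (fun w : Q => (z * (x0 * (z * (x0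 * w))))) (rc_e1053 x0 (z * ((z * x0) * (z * x0))) (z * x0)))) (congrArg (fun w : Q => (z * (x0 * (z * (x0 * (z * (x0 * w))))))) (lemN x0 ((z * x0) * (z * x0))))) (congrArg (fun w : Q => (z * (x0 * (z * (x0 * (z * (x0 * (z * w)))))))) (rc_e1615 x0 x0 (z * x0)).symm)) (congrArg (fun w : Q => (z * (x0 * (z * (x0 * (z * (x0 * (z * (x0 * w))))))))) (rc_e39275 z x0))) (congrArg (fun w : Q => (z * (x0 * (z * (x0 * (z * w)))))) (rc_e31876 x0))) (congrArg (fun w : Q => (z * w)) (rc_e38125 x0 z))) hzz)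
    have hTz : ∀ a : Q, z * (z * a) = a := fun a => hT z a
    have Mneut1 : ∀ a : Q, ((z * z) * (z * a)) = a := fun a => (Eq.trans (congrArg (fun w : Q => (w * (z * a))) hzz) (hT z a))
    have Mneut2 : ∀ a : Q, ((z * a) * (z * z)) = a := fun a => (Eq.trans (Eq.trans (congrArg (fun w : Q => ((z * a) * w)) hzz) (hcomm (z * a) z)) (hT z a))
    have Minv1 : ∀ a b : Q, ((z * (z * a)) * (z * ((z * a) * (z * b)))) = b := fun a b => (Eq.trans (Eq.trans (Eq.trans (congrArg (fun w : Q => (w * (z * ((z * a) * (z * b))))) (hTz a)) (congrArg (fun w : Q => (a * (z * w))) (lemN a b))) (congrArg (fun w : Q => (a * w)) (hTz (a * b)))) (hT a b))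
    have Minv2 : ∀ a b : Q, ((z * ((z * b) * (z * a))) * (z * (z * a))) = b := fun a b => (Eq.trans (Eq.trans (Eq.trans (Eq.trans (Eq.trans (congrArg (fun w : Q => ((z * ((z * b) * (z * a))) * w)) (hTz a)) (congrArg (fun w : Q => ((z * w) * a)) (lemN b a))) (congrArg (fun w : Q => (w * a)) (hTz (b * a)))) (hcomm (b * a) a)) (congrArg (fun w : Q => (a * w)) (hcomm b a))) (hT a b))
    have MRIF1 : ∀ a b c : Q, ((z * ((z * ((z * a) * (z * b))) * (z * c))) * (z * ((z * a) * (z * b)))) = (z * (((a * b) * (a * b)) * c)) := fun a b c => (Eq.trans (Eq.trans (Eq.trans (Eq.trans (Eq.trans (Eq.trans (Eq.trans (Eq.trans (Eq.trans (lemN ((z * ((z * a) * (z * b))) * (z * c)) ((z * a) * (z * b))) (congrArg (fun w : Q => (z * (w * ((z * a) * (z * b))))) (lemN ((z * a) * (z * b)) c))) (congrArg (fun w : Q => (z * ((z * (w * c)) * ((z * a) * (z * b))))) (lemN a b))) (congrArg (fun w : Q => (z * ((z * ((z * (a * b)) * c)) * w))) (lemN a b))) (congrArg (fun w : Q => (z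 * w)) (lemN ((z * (a * b)) * c) (a * b)))) (hT z (((z * (a * b)) * c) * (a * b)))) (congrArg (fun w : Q => (((z * (a * b)) * c) * w)) (hTz (a * b)).symm)) (lemH1 (z * (a * b)) c)) (congrArg (fun w : Q => (z * ((z * w) * c))) (lemN (a * b) (a * b)))) (congrArg (fun w : Q => (z * (w * c))) (hTz ((a * b) * (a * b)))))
    have MRIF2 : ∀ a b c : Q, ((z * a) * (z * ((z * b) * (z * ((z * ((z * c) * (z * a))) * (z * b)))))) = (z * (((a * b) * (a * b)) * c)) := fun a b c => (Eq.trans (Eq.trans (Eq.trans (Eq.trans (Eq.trans (Eq.trans (Eq.trans (Eq.trans (Eq.trans (Eq.trans (Eq.trans (Eq.trans (Eq.trans (Eq.trans (Eq.trans (Eq.trans (Eq.trans (Eq.trans (Eq.trans (Eq.trans (lemN a ((z * b) * (z * ((z * ((z * c) * (z * a))) * (z * b))))) (congrArg (fun w : Q => (z * (a * w))) (lemN b ((z * ((z * c) * (z * a))) * (z * b))))) (congrArg (fun w : Q => (z * (a * (z * (b * w))))) (lemN ((z * c) * (z * a)) b))) (congrArg (fun w : Q => (z * (a * (z * (b * (z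 * (w * b))))))) (lemN c a))) (congrArg (fun w : Q => (z * (a * (z * (w * (z * ((z * (c * a)) * b))))))) (hTz b).symm)) (congrArg (fun w : Q => (z * (a * (z * w)))) (lemN (z * b) ((z * (c * a)) * b)))) (congrArg (fun w : Q => (z * (a * w))) (hTz ((z * b) * ((z * (c * a)) * b))))) (congrArg (fun w : Q => (z * (a * w))) (hcomm (z * b) ((z * (c * a)) * b)))) (congrArg (fun w : Q => (z * (a * (w * (z * b))))) (hcomm (z * (c * a)) b))) (congrArg (fun w : Q => (z * (a * w))) (lemH1 b (z * (c * a))))) (congrArg (fun w : Q => (z * (w * (z * ((z * (b * b)) * (z * (c * a))))))) (hTz a).symm)) (congrArg (fun w : Q => (z * w)) (lemN (z * a) ((z * (b * b)) * (z * (c * a)))))) (hTz ((z * a) * ((z * (b * b)) * (z * (c * a)))))) (congrArg (fun w : Q => ((z * a) * (w * (z * (c * a))))) (lemN b b).symm)) (congrArg (fun w : Q => ((z * a) * (((z * b) * (z * b)) * w))) (lemN c a).symm)) (congrArg (fun w : Q => ((z * a) * (((z * b) * (z * b)) * w))) (hcomm (z * c) (z * a)))) (hQ2 (z * a) (z * b)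 (z * c))) (congrArg (fun w : Q => ((w * ((z * a) * (z * b))) * (z * c))) (lemN a b))) (congrArg (fun w : Q => (((z * (a * b)) * w) * (z * c))) (lemN a b))) (congrArg (fun w : Q => (w * (z * c))) (lemN (a * b) (a * b)))) (lemN ((a * b) * (a * b)) c))
    refine ⟨?_, ?_, ?_, ?_, ?_, ?_, ?_⟩
    · intro a
      exact (Quasigroup.mulLeft_bijective (z * a)).comp (Quasigroup.mulLeft_bijective z)
    · intro a
      exact (Quasigroup.mulRight_bijective (z * a)).comp (Quasigroup.mulLeft_bijective z)
    · intro x; exact ⟨Mneut1 x, Mneut2 x⟩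
    · intro x y; exact hcomm (z * x) (z * y)
    · exact ⟨fun x => z * x, fun x y => ⟨Minv1 x y, Minv2 x y⟩⟩
    · intro x y w; exact (MRIF1 x y w).trans (MRIF2 x y w).symm
    · intro x; exact lemX6 x


end CRIFPaper
end

section
/- Let (Q,·) be a totally symmetric quasigroup satisfying the identities (Q1) and (Q2), and let 0 ∈ Q be an idempotent. Let I = {x ∈ Q : x·x = x} be the set of idempotents and U = {x ∈ Q : x·x = 0}. Then I and U are subquasigroups of Q; I is a distributive quasigroup (x·(y·z) = (x·y)·(x·z) and (x·y)·z = (x·z)·(y·z) hold on I); U with the operation · and neutral element 0 is a Steiner loop; and the map φ : I × U → Q defined by φ(a,u) = (0·a)·(0·u) is a bijection satisfying φ(a,u)·φ(b,v) = φ(a·b, u·v). Thus Q is the direct product of a distributive quasigroup and a Steiner loop. -/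
universe u

namespace CRIFPaper

/-- A totally symmetric quasigroup satisfying (Q1) and (Q2) with an idempotent
`z` is the direct product of its subquasigroup `I` of idempotents (which is
distributive) and the Steiner loop `U = {x | x · x = z}`. -/
theorem statement19 (Q : Type u) [Quasigroup Q]
    (hcomm : ∀ x y : Q, x * y = y * x)
    (hts : ∀ x y : Q, x * (x * y) = y)
    (hq1 : ∀ x : Q, (x * x) * (x * x) = x * x)
    (hq2 : ∀ x y w : Q, x * ((y * y) * (x * w)) = ((x * y) * (x * y)) * w)
    (z : Q) (hz : z * z = z)
    (I U : Set Q)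
    (hI : I = {x : Q | x * x = x})
    (hU : U = {x : Q | x * x = z}) :
    -- I and U are subquasigroups
    (∀ a ∈ I, ∀ b ∈ I, a * b ∈ I) ∧
    (∀ a ∈ U, ∀ b ∈ U, a * b ∈ U) ∧
    -- I is distributive
    (∀ a ∈ I, ∀ b ∈ I, ∀ c ∈ I,
      a * (b * c) = (a * b) * (a * c) ∧ (a * b) * c = (a * c) * (b * c)) ∧
    -- U with operation · and neutral element z is a Steiner loop
    (z ∈ U ∧ (∀ x ∈ U, z * x = x ∧ x * z = x) ∧
      (∀ a ∈ U, ∀ b ∈ U, ∃! x : Q, x ∈ U ∧ a * x = b)) ∧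
    -- φ(a, u) = (z·a)·(z·u) is a bijection I × U → Q
    Function.Bijective (fun p : I × U => (z * (p.1 : Q)) * (z * (p.2 : Q))) ∧
    -- and φ is multiplicative
    (∀ a ∈ I, ∀ u ∈ U, ∀ b ∈ I, ∀ v ∈ U,
      ((z * a) * (z * u)) * ((z * b) * (z * v)) = (z * (a * b)) * (z * (u * v))) := by
  subst hI hU
  -- left cancellation
  have lcancel : ∀ x a b : Q, x * a = x * b → a = b := by
    intro x a b h
    have : x * (x * a) = x * (x * b) := by rw [h]
    rwa [hts, hts] at this
  have rcancel : ∀ x a b : Q, a * x = b * x → a = b := by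
    intro x a b h
    exact lcancel x a b (by rw [hcomm x a, hcomm x b]; exact h)
  -- (B)
  have hB : ∀ x y t : Q, x * ((y * y) * t) = ((x * y) * (x * y)) * (x * t) := by
    intro x y t
    have h := hq2 x y (x * t)
    rwa [hts] at h
  -- squaring is multiplicative
  have L1 : ∀ x y : Q, (x * y) * (x * y) = (x * x) * (y * y) := by
    intro x y
    have hC : ((x * y) * (x * y)) * (x * x) = y * y := by
      have h := hB x y x
      rw [hcomm (y * y) x, hts] at h
      exact h.symm
    have h2 : ((x * x) * (y * y)) * (x * x) = y * y := by
      rw [hcomm ((x * x) * (y * y)) (x * x), hts]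
    exact rcancel (x * x) _ _ (hC.trans h2.symm)
  have Iclosed : ∀ a b : Q, a * a = a → b * b = b → (a * b) * (a * b) = a * b := by
    intro a b ha hb; rw [L1, ha, hb]
  have Uclosed : ∀ a b : Q, a * a = z → b * b = z → (a * b) * (a * b) = z := by
    intro a b ha hb; rw [L1, ha, hb, hz]
  -- z is neutral on U
  have hzU : ∀ u : Q, u * u = z → z * u = u := by
    intro u hu
    have h1 : u * (z * (u * z)) = z := by
      have h := hB u u (u * z)
      rw [hu, hz, hts u z, hz] at h
      exact h
    have h2 : z * (u * z) = u * z := lcancel u _ _ (h1.trans (hts u z).symm)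
    rw [hcomm u z] at h2
    rw [hts] at h2
    exact h2.symm
  -- (D): distributivity over an idempotent
  have hD : ∀ x e t : Q, e * e = e → x * (e * t) = ((x * x) * e) * (x * t) := by
    intro x e t he
    have h := hB x e t
    rw [he, L1 x e, he] at h
    exact h
  -- (E')
  have hE : ∀ e t v : Q, e * e = e → v * v = z → (e * t) * v = (z * e) * (t * v) := by
    intro e t v he hv
    rw [hcomm (e * t) v, hD v e t he, hv, hcomm v t]
  -- key multiplicativity
  have hmul : ∀ e f u v : Q, e * e = e → f * f = f → u * u = z → v * v = z →
      (e * u) * (f * v) = (e * f) * (u * v) := by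
    intro e f u v he hf hu hv
    have hge : (z * e) * (z * e) = z * e := by rw [L1, hz, he]
    have step1 : (e * u) * (f * v) = (((e * u) * (e * u)) * f) * ((e * u) * v) :=
      hD (e * u) f v hf
    rw [L1 e u, he, hu] at step1
    rw [hE e u v he hv] at step1
    rw [hcomm e z] at step1
    have step2 : (z * e) * (f * (u * v)) = (((z * e) * (z * e)) * f) * ((z * e) * (u * v)) :=
      hD (z * e) f (u * v) hf
    rw [hge] at step2
    rw [step1, ← step2, ← hE e f (u * v) he (Uclosed u v hu hv)]
  refine ⟨?_, ?_, ?_, ?_, ?_, ?_⟩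
  · intro a ha b hb
    exact Iclosed a b ha hb
  · intro a ha b hb
    exact Uclosed a b ha hb
  · intro a ha b hb c hc
    have ha' : a * a = a := ha
    have hb' : b * b = b := hb
    have hc' : c * c = c := hc
    constructor
    · rw [hD a b c hb', ha']
    · rw [hcomm (a * b) c, hD c a b ha', hc', hcomm c a, hcomm c b]
  · refine ⟨hz, ?_, ?_⟩
    · intro x hx
      have h := hzU x hx
      exact ⟨h, by rw [hcomm x z]; exact h⟩
    · intro a ha b hb
      refine ⟨a * b, ⟨Uclosed a b ha hb, hts a b⟩, ?_⟩
      intro y ⟨_, hy⟩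
      exact lcancel a y (a * b) (hy.trans (hts a b).symm)
  · constructor
    · rintro ⟨⟨a, ha⟩, ⟨u, hu⟩⟩ ⟨⟨b, hb⟩, ⟨v, hv⟩⟩ h
      simp only at h
      have ha' : a * a = a := ha
      have hb' : b * b = b := hb
      have hu' : u * u = z := hu
      have hv' : v * v = z := hv
      rw [hzU u hu', hzU v hv'] at h
      have hsq : (((z * a) * u) * ((z * a) * u)) = a := by
        rw [L1, L1, hz, ha', hu', hcomm (z * a) z, hts]
      have hsq2 : (((z * b) * v) * ((z * b) * v)) = b := by
        rw [L1, L1, hz, hb', hv', hcomm (z * b) z, hts]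
      have hab : a = b := by
        rw [← hsq, ← hsq2, h]
      subst hab
      have huv : u = v := lcancel (z * a) u v h
      subst huv
      rfl
    · intro x
      have he : (x * x) * (x * x) = x * x := hq1 x
      have hu : ((z * (x * x)) * x) * ((z * (x * x)) * x) = z := by
        rw [L1, L1, hz, he, hcomm (z * (x * x)) (x * x), hcomm z (x * x), hts]
      refine ⟨⟨⟨x * x, he⟩, ⟨(z * (x * x)) * x, hu⟩⟩, ?_⟩
      simp only
      rw [hzU _ hu, hts]
  · intro a ha u hu b hb v hv
    have ha' : a * a = a := ha
    have hb' : b * b = b := hb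
    have hu' : u * u = z := hu
    have hv' : v * v = z := hv
    rw [hzU u hu', hzU v hv', hzU _ (Uclosed u v hu' hv')]
    rw [hmul (z * a) (z * b) u v (by rw [L1, hz, ha']) (by rw [L1, hz, hb']) hu' hv']
    rw [hD z a b ha', hz]


end CRIFPaper
end
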